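/- arXiv:1012.0774 — 8 statements merged into one kernel-verified Lean document; each statement's English description precedes it below -/
import Mathlib

section
/- Let p ≥ 1 and let R : ℝ^n → ℝ be a convex, continuous, even, positively p-homogeneous function (hence R ≥ 0). Then for all f, g ∈ ℝ^n, all r(f) ∈ ∂R(f) and all r(g) ∈ ∂R(g): |⟨r(f), g⟩| ≤ ⟨r(f), f⟩^{1−1/p} · ⟨r(g), g⟩^{1/p} = p · R(f)^{1−1/p} · R(g)^{1/p}. -/
/-!
A subgradient `r` of a positively `p`-homogeneous `R` at `x` satisfies Euler's identity
`⟨r, x⟩ = p R(x)` (along the ray `t ↦ t • x`, `t ↦ (t ^ p - 1) R(x) - (t - 1) ⟨r, x⟩` is nonnegative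
and vanishes at `t = 1`, so its derivative there is zero).
Testing the subgradient inequality at `f` against `± γ • g` then gives
`± γ ⟨r(f), g⟩ ≤ γ ^ p R(g) + (p - 1) R(f)` for all `γ > 0`, and minimising the right-hand side
over `γ` (Young's inequality read backwards) yields `p R(f)^(1-1/p) R(g)^(1/p)`.
Testing it against `-x` and using evenness shows `R ≥ 0` wherever a subgradient exists.
-/

open Finset

/-- Euclidean inner product on `Fin n → ℝ`. -/
def ip {n : ℕ} (x y : Fin n → ℝ) : ℝ := ∑ i, x i * y i

/-- Subdifferential of a convex function `R : ℝ^n → ℝ` at `x`. -/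
def subdiff {n : ℕ} (R : (Fin n → ℝ) → ℝ) (x : Fin n → ℝ) : Set (Fin n → ℝ) :=
  {r | ∀ y, R x + ip r (y - x) ≤ R y}

/-- `G` is positively `p`-homogeneous: `G (γ • x) = γ^p * G x` for all `γ ≥ 0`. -/
def PosHomog {n : ℕ} (p : ℝ) (G : (Fin n → ℝ) → ℝ) : Prop :=
  ∀ γ : ℝ, 0 ≤ γ → ∀ x, G (γ • x) = γ ^ p * G x

open Filter Topology

section Young

variable {p a b c : ℝ}

theorem le_mul_rpow_mul_rpow_of_forall_mul_le_of_pos (hp : 0 < p) (ha : 0 < a) (hb : 0 < b)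
    (h : ∀ γ > 0, c * γ ≤ γ ^ p * b + (p - 1) * a) :
    c ≤ p * a ^ (1 - 1 / p) * b ^ (1 / p) := by
  -- the optimal scale `γ = (a / b) ^ (1 / p)` balances `γ ^ p * b` against `a`
  set γ := a ^ (1 / p) / b ^ (1 / p)
  have hγ : 0 < γ := by positivity
  have hγp : γ ^ p * b = a := by
    rw [Real.div_rpow (by positivity) (by positivity), ← Real.rpow_mul ha.le,
      ← Real.rpow_mul hb.le, one_div_mul_cancel hp.ne', Real.rpow_one, Real.rpow_one,
      div_mul_cancel₀ _ hb.ne']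
  have hrhs : p * a ^ (1 - 1 / p) * b ^ (1 / p) * γ = p * a := by
    calc p * a ^ (1 - 1 / p) * b ^ (1 / p) * γ = p * (a ^ (1 - 1 / p) * a ^ (1 / p)) := by
          simp only [γ]; field_simp
      _ = p * a := by rw [← Real.rpow_add ha, sub_add_cancel, Real.rpow_one]
  refine le_of_mul_le_mul_right ?_ hγ
  rw [hrhs]
  linarith [h γ hγ]

theorem le_mul_rpow_mul_rpow_of_forall_mul_le (hp : 1 ≤ p) (ha : 0 ≤ a) (hb : 0 ≤ b)
    (h : ∀ γ > 0, c * γ ≤ γ ^ p * b + (p - 1) * a) :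
    c ≤ p * a ^ (1 - 1 / p) * b ^ (1 / p) := by
  have hp0 : 0 < p := by linarith
  -- perturb `a` and `b` to positive values, then let the perturbation tend to `0`
  have hbound : ∀ ε > 0, c ≤ p * (a + ε) ^ (1 - 1 / p) * (b + ε) ^ (1 / p) := by
    intro ε hε
    refine le_mul_rpow_mul_rpow_of_forall_mul_le_of_pos hp0 (by linarith) (by linarith)
      fun γ hγ => (h γ hγ).trans ?_
    have : 0 ≤ γ ^ p := by positivity
    nlinarith
  have hcont : Continuous fun ε : ℝ => p * (a + ε) ^ (1 - 1 / p) * (b + ε) ^ (1 / p) := by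
    have h1 : 0 ≤ 1 - 1 / p := by
      rw [sub_nonneg, div_le_one hp0]
      exact hp
    have h2 : 0 ≤ 1 / p := by positivity
    fun_prop (disch := assumption)
  refine ge_of_tendsto (x := 𝓝[>] 0) ?_ (eventually_nhdsWithin_of_forall hbound)
  simpa using (hcont.tendsto 0).mono_left (nhdsWithin_le_nhds (s := Set.Ioi 0))

theorem mul_rpow_one_sub_mul_mul_rpow (hp : 0 < p) (ha : 0 ≤ a) (hb : 0 ≤ b) :
    (p * a) ^ (1 - 1 / p) * (p * b) ^ (1 / p) = p * a ^ (1 - 1 / p) * b ^ (1 / p) := by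
  rw [Real.mul_rpow hp.le ha, Real.mul_rpow hp.le hb]
  calc p ^ (1 - 1 / p) * a ^ (1 - 1 / p) * (p ^ (1 / p) * b ^ (1 / p))
      = p ^ (1 - 1 / p + 1 / p) * a ^ (1 - 1 / p) * b ^ (1 / p) := by
        rw [Real.rpow_add hp]; ring
    _ = p * a ^ (1 - 1 / p) * b ^ (1 / p) := by rw [sub_add_cancel, Real.rpow_one]

end Young

section Subdifferential

variable {n : ℕ} {p : ℝ} {R : (Fin n → ℝ) → ℝ} {r x : Fin n → ℝ}

theorem ip_sub (r x y : Fin n → ℝ) : ip r (x - y) = ip r x - ip r y := dotProduct_sub r x y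

theorem ip_smul (r : Fin n → ℝ) (t : ℝ) (x : Fin n → ℝ) : ip r (t • x) = t * ip r x :=
  dotProduct_smul t r x

theorem ip_neg (r x : Fin n → ℝ) : ip r (-x) = -ip r x := dotProduct_neg r x

theorem ip_eq_mul_of_mem_subdiff (hR : PosHomog p R) (hr : r ∈ subdiff R x) :
    ip r x = p * R x := by
  set φ : ℝ → ℝ := fun t => (t ^ p - 1) * R x - (t - 1) * ip r x
  have hφ : HasDerivAt φ (p * R x - ip r x) 1 := by
    have h : HasDerivAt φ (p * 1 ^ (p - 1) * R x - 1 * ip r x) 1 :=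
      (((Real.hasDerivAt_rpow_const (Or.inl one_ne_zero)).sub_const 1).mul_const (R x)).sub
        (((hasDerivAt_id' 1).sub_const 1).mul_const (ip r x))
    rwa [Real.one_rpow, mul_one, one_mul] at h
  have hmin : IsLocalMin φ 1 := by
    filter_upwards [eventually_gt_nhds one_pos] with t ht
    have h := hr (t • x)
    rw [hR t ht.le x, ip_sub, ip_smul] at h
    simp only [φ, Real.one_rpow, sub_self, zero_mul]
    linarith
  linarith [hmin.hasDerivAt_eq_zero hφ]

theorem mul_ip_le_of_mem_subdiff (hR : PosHomog p R) (hr : r ∈ subdiff R x) (y : Fin n → ℝ)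
    {γ : ℝ} (hγ : 0 ≤ γ) : γ * ip r y ≤ γ ^ p * R y + (p - 1) * R x := by
  have h := hr (γ • y)
  rw [hR γ hγ y, ip_sub, ip_smul, ip_eq_mul_of_mem_subdiff hR hr] at h
  linarith

theorem nonneg_of_mem_subdiff (hp : 0 < p) (heven : ∀ x, R (-x) = R x) (hR : PosHomog p R)
    (hr : r ∈ subdiff R x) : 0 ≤ R x := by
  have h := mul_ip_le_of_mem_subdiff hR hr (-x) zero_le_one
  rw [ip_neg, ip_eq_mul_of_mem_subdiff hR hr, heven, Real.one_rpow] at h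
  nlinarith

end Subdifferential

theorem hoelder_type_inequality_general {n : ℕ} (p : ℝ) (hp : 1 ≤ p) (R : (Fin n → ℝ) → ℝ)
    (heven : ∀ x, R (-x) = R x) (hhom : PosHomog p R)
    (f g : Fin n → ℝ) (rf : Fin n → ℝ) (hrf : rf ∈ subdiff R f)
    (rg : Fin n → ℝ) (hrg : rg ∈ subdiff R g) :
    |ip rf g| ≤ (ip rf f) ^ (1 - 1/p) * (ip rg g) ^ (1/p) ∧
    (ip rf f) ^ (1 - 1/p) * (ip rg g) ^ (1/p) = p * (R f) ^ (1 - 1/p) * (R g) ^ (1/p) := by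
  have hp0 : 0 < p := by linarith
  have hf := nonneg_of_mem_subdiff hp0 heven hhom hrf
  have hg := nonneg_of_mem_subdiff hp0 heven hhom hrg
  have hbound (y : Fin n → ℝ) (hy : R y = R g) :
      ip rf y ≤ p * R f ^ (1 - 1 / p) * R g ^ (1 / p) :=
    le_mul_rpow_mul_rpow_of_forall_mul_le hp hf hg fun γ hγ => by
      rw [mul_comm, ← hy]
      exact mul_ip_le_of_mem_subdiff hhom hrf y hγ.le
  rw [ip_eq_mul_of_mem_subdiff hhom hrf, ip_eq_mul_of_mem_subdiff hhom hrg,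
    mul_rpow_one_sub_mul_mul_rpow hp0 hf hg]
  refine ⟨abs_le'.2 ⟨hbound g rfl, ?_⟩, rfl⟩
  rw [← ip_neg]
  exact hbound (-g) (heven g)

/-- Hölder-type inequality (generalization of a result of Zarantonello): for a convex,
continuous, even, positively `p`-homogeneous `R` (`p ≥ 1`), any `f, g` and any
subgradients `r(f) ∈ ∂R(f)`, `r(g) ∈ ∂R(g)`:
`|⟨r(f), g⟩| ≤ ⟨r(f), f⟩^(1−1/p) ⟨r(g), g⟩^(1/p) = p · R(f)^(1−1/p) R(g)^(1/p)`. -/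
theorem hoelder_type_inequality {n : ℕ} (p : ℝ) (hp : 1 ≤ p) (R : (Fin n → ℝ) → ℝ)
    (hconvex : ConvexOn ℝ Set.univ R) (hcont : Continuous R)
    (heven : ∀ x, R (-x) = R x) (hhom : PosHomog p R)
    (f g : Fin n → ℝ) (rf : Fin n → ℝ) (hrf : rf ∈ subdiff R f)
    (rg : Fin n → ℝ) (hrg : rg ∈ subdiff R g) :
    |ip rf g| ≤ (ip rf f) ^ (1 - 1/p) * (ip rg g) ^ (1/p) ∧
    (ip rf f) ^ (1 - 1/p) * (ip rg g) ^ (1/p) = p * (R f) ^ (1 - 1/p) * (R g) ^ (1/p) :=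
  hoelder_type_inequality_general p hp R heven hhom f g rf hrf rg hrg
end

section
/- Let p = 1 in the framework. Let (f^k)_{k∈ℕ} be a sequence in ℝ^n with ‖f^k‖₂ = 1 for all k, such that for each k there exists s^k ∈ ∂S(f^k) for which f^{k+1} minimizes u ↦ R(u) − F(f^k)⟨u, s^k⟩ over the Euclidean unit ball {u : ‖u‖₂ ≤ 1}. Then the sequence F(f^k) is nonincreasing and converges to some λ* ∈ [0, F(f^0)]; moreover (f^k) has a convergent subsequence, and every cluster point f* of (f^k) satisfies f* ≠ 0 and there exist r* ∈ ∂R(f*), s* ∈ ∂S(f*) with r* − λ* s* = 0, where λ* = R(f*)/S(f*). -/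
open Finset Filter

/-!
Testing the minimality of `f^(k+1)` against `f^k` and using `⟨f^(k+1), s^k⟩ ≤ S(f^(k+1))`
(the subgradient inequality of the 1-homogeneous `S`, combined with Euler's identity
`⟨s, x⟩ = S x`) shows that `F(f^k)` decreases. Along a subsequence with `f^k → f*` and
`s^k → s*`, the defect in the minimality of `f^(k+1)` is at most
`(F(f^k) - F(f^(k+1))) * Lip(S) → 0`, so `λ* ⟨·, s*⟩ ≤ R` on the unit ball, hence everywhere by
homogeneity; with `⟨s*, f*⟩ = S(f*)` this says `λ* s* ∈ ∂R(f*)`.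
-/

open Topology

section Subdifferential

variable {n : ℕ}

lemma ip_comm (x y : Fin n → ℝ) : ip x y = ip y x := dotProduct_comm x y

lemma ip_sub_right (x y z : Fin n → ℝ) : ip x (y - z) = ip x y - ip x z := dotProduct_sub x y z

lemma ip_smul_left (c : ℝ) (x y : Fin n → ℝ) : ip (c • x) y = c * ip x y := smul_dotProduct c x y

lemma continuous_ip : Continuous fun p : (Fin n → ℝ) × (Fin n → ℝ) => ip p.1 p.2 :=
  continuous_fst.dotProduct continuous_snd

lemma mem_subdiff_of_ip_le {S : (Fin n → ℝ) → ℝ} {x s : Fin n → ℝ}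
    (hx : ip s x = S x) (hle : ∀ y, ip s y ≤ S y) : s ∈ subdiff S x := fun y => by
  rw [ip_sub_right, hx]
  linarith [hle y]

lemma mem_subdiff_of_tendsto {ι : Type*} {l : Filter ι} [l.NeBot] {S : (Fin n → ℝ) → ℝ}
    (hS : Continuous S) {x s : ι → Fin n → ℝ} {x₀ s₀ : Fin n → ℝ}
    (hx : Tendsto x l (𝓝 x₀)) (hs : Tendsto s l (𝓝 s₀)) (hmem : ∀ i, s i ∈ subdiff S (x i)) :
    s₀ ∈ subdiff S x₀ := fun y =>
  le_of_tendsto (((hS.tendsto x₀).comp hx).add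
      ((continuous_ip.tendsto _).comp (hs.prodMk_nhds (tendsto_const_nhds.sub hx))))
    (Eventually.of_forall fun i => hmem i y)

lemma PosHomog.map_zero {p : ℝ} (hp : p ≠ 0) {G : (Fin n → ℝ) → ℝ} (hG : PosHomog p G) :
    G 0 = 0 := by
  simpa [Real.zero_rpow hp] using hG 0 le_rfl 0

variable {S : (Fin n → ℝ) → ℝ} {x s : Fin n → ℝ}

/-- Euler's identity; test the subgradient inequality at `2 • x` and at `0`. -/
lemma PosHomog.ip_eq_of_mem_subdiff (hS : PosHomog 1 S) (hs : s ∈ subdiff S x) :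
    ip s x = S x := by
  have h2 : S ((2 : ℝ) • x) = 2 * S x := by simpa using hS 2 zero_le_two x
  have hup := hs ((2 : ℝ) • x)
  rw [h2, two_smul, add_sub_cancel_right] at hup
  have hdown : S x - ip s x ≤ 0 := by
    simpa [ip_sub_right, hS.map_zero one_ne_zero, ip] using hs 0
  linarith

lemma PosHomog.ip_le_of_mem_subdiff (hS : PosHomog 1 S) (hs : s ∈ subdiff S x)
    (y : Fin n → ℝ) : ip s y ≤ S y := by
  have := hs y
  rw [ip_sub_right, hS.ip_eq_of_mem_subdiff hs] at this
  linarith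

lemma PosHomog.norm_le_of_mem_subdiff {K : NNReal} (hS : PosHomog 1 S) (hK : LipschitzWith K S)
    (hs : s ∈ subdiff S x) : ‖s‖ ≤ K := by
  have hbound : ∀ y, ip s y ≤ K * ‖y‖ := fun y =>
    (hS.ip_le_of_mem_subdiff hs y).trans
      ((le_abs_self _).trans (hK.norm_le_mul (hS.map_zero one_ne_zero) y))
  refine (pi_norm_le_iff_of_nonneg K.coe_nonneg).2 fun i => ?_
  have hsingle : ip s (Pi.single i 1) = s i := (dotProduct_single s 1 i).trans (mul_one _)
  have hup := hbound (Pi.single i 1)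
  have hdown := hbound (-Pi.single i 1)
  rw [hsingle, Pi.norm_single, norm_one, mul_one] at hup
  rw [show ip s (-Pi.single i 1) = -ip s (Pi.single i 1) from dotProduct_neg _ _, hsingle,
    norm_neg, Pi.norm_single, norm_one, mul_one] at hdown
  rw [Real.norm_eq_abs, abs_le]
  constructor <;> linarith

lemma PosHomog.le_of_forall_sum_sq_le_one {R : (Fin n → ℝ) → ℝ} (hR : PosHomog 1 R) {c : ℝ}
    (h : ∀ u : Fin n → ℝ, ∑ i, u i ^ 2 ≤ 1 → c * ip u s ≤ R u) (u : Fin n → ℝ) :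
    c * ip u s ≤ R u := by
  set A := ∑ i, u i ^ 2
  have hA : 0 ≤ A := by positivity
  set t := (1 + A)⁻¹
  have ht : 0 < t := by positivity
  have htu : ∑ i, (t • u) i ^ 2 ≤ 1 := by
    have hsum : ∑ i, (t • u) i ^ 2 = A / (1 + A) ^ 2 := by
      simp only [Pi.smul_apply, smul_eq_mul, mul_pow, ← Finset.mul_sum, t, inv_pow]
      ring
    rw [hsum, div_le_one (by positivity)]
    nlinarith
  have hscaled := h (t • u) htu
  rw [ip_smul_left, show R (t • u) = t * R u by simpa using hR t ht.le u] at hscaled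
  exact le_of_mul_le_mul_left (by linarith) ht

end Subdifferential

section UnitSphere

variable {n : ℕ} {x : Fin n → ℝ}

lemma norm_le_one_of_sum_sq_le_one (hx : ∑ i, x i ^ 2 ≤ 1) : ‖x‖ ≤ 1 :=
  (pi_norm_le_iff_of_nonneg zero_le_one).2 fun i => by
    rw [Real.norm_eq_abs, ← sq_le_one_iff_abs_le_one]
    exact (Finset.single_le_sum (fun j _ => sq_nonneg (x j)) (mem_univ i)).trans hx

lemma ne_zero_of_sum_sq_eq_one (hx : ∑ i, x i ^ 2 = 1) : x ≠ 0 := by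
  rintro rfl
  simp at hx

lemma isClosed_setOf_sum_sq_eq_one : IsClosed {x : Fin n → ℝ | ∑ i, x i ^ 2 = 1} :=
  isClosed_eq (by fun_prop) continuous_const

end UnitSphere

structure IsInversePowerIteration {n : ℕ} (R S : (Fin n → ℝ) → ℝ) (f s : ℕ → Fin n → ℝ) :
    Prop where
  sum_sq_eq_one : ∀ k, ∑ i, f k i ^ 2 = 1
  mem_subdiff : ∀ k, s k ∈ subdiff S (f k)
  isMinOn : ∀ k, IsMinOn (fun u => R u - R (f k) / S (f k) * ip u (s k))
    {u | ∑ i, u i ^ 2 ≤ 1} (f (k + 1))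

namespace IsInversePowerIteration

variable {n : ℕ} {R S : (Fin n → ℝ) → ℝ} {f s : ℕ → Fin n → ℝ}

lemma step_le (hI : IsInversePowerIteration R S f s) (hRnonneg : ∀ x, 0 ≤ R x)
    (hSpos : ∀ x, x ≠ 0 → 0 < S x) (hShom : PosHomog 1 S) (k : ℕ) {u : Fin n → ℝ}
    (hu : ∑ i, u i ^ 2 ≤ 1) :
    (R (f (k + 1)) / S (f (k + 1)) - R (f k) / S (f k)) * S (f (k + 1)) ≤
      R u - R (f k) / S (f k) * ip u (s k) := by
  have hF : 0 ≤ R (f k) / S (f k) :=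
    div_nonneg (hRnonneg _) (hSpos _ (ne_zero_of_sum_sq_eq_one (hI.sum_sq_eq_one k))).le
  have hS_succ := hSpos _ (ne_zero_of_sum_sq_eq_one (hI.sum_sq_eq_one (k + 1)))
  have hsupport : ip (f (k + 1)) (s k) ≤ S (f (k + 1)) :=
    ip_comm (f (k + 1)) (s k) ▸ hShom.ip_le_of_mem_subdiff (hI.mem_subdiff k) _
  have hmin : R (f (k + 1)) - R (f k) / S (f k) * ip (f (k + 1)) (s k) ≤
      R u - R (f k) / S (f k) * ip u (s k) := hI.isMinOn k hu
  rw [sub_mul, div_mul_cancel₀ _ hS_succ.ne']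
  nlinarith [mul_le_mul_of_nonneg_left hsupport hF]

lemma antitone (hI : IsInversePowerIteration R S f s) (hRnonneg : ∀ x, 0 ≤ R x)
    (hSpos : ∀ x, x ≠ 0 → 0 < S x) (hShom : PosHomog 1 S) :
    Antitone fun k => R (f k) / S (f k) := by
  refine antitone_nat_of_succ_le fun k => ?_
  have hstep := hI.step_le hRnonneg hSpos hShom k (hI.sum_sq_eq_one k).le
  have hSk := hSpos _ (ne_zero_of_sum_sq_eq_one (hI.sum_sq_eq_one k))
  rw [ip_comm, hShom.ip_eq_of_mem_subdiff (hI.mem_subdiff k), div_mul_cancel₀ _ hSk.ne',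
    sub_self] at hstep
  have := hSpos _ (ne_zero_of_sum_sq_eq_one (hI.sum_sq_eq_one (k + 1)))
  nlinarith

lemma exists_tendsto_subseq (hI : IsInversePowerIteration R S f s) :
    ∃ φ : ℕ → ℕ, StrictMono φ ∧ ∃ g, Tendsto (f ∘ φ) atTop (𝓝 g) := by
  obtain ⟨g, -, φ, hφ, hg⟩ := (isCompact_closedBall (0 : Fin n → ℝ) 1).tendsto_subseq fun k =>
    mem_closedBall_zero_iff.2 (norm_le_one_of_sum_sq_le_one (hI.sum_sq_eq_one k).le)
  exact ⟨φ, hφ, g, hg⟩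

lemma exists_subseq_tendsto_of_mapClusterPt (hI : IsInversePowerIteration R S f s)
    {K : NNReal} (hShom : PosHomog 1 S) (hSlip : LipschitzWith K S) {fstar : Fin n → ℝ}
    (hf : MapClusterPt fstar atTop f) :
    ∃ φ : ℕ → ℕ, StrictMono φ ∧ ∃ sstar,
      Tendsto (f ∘ φ) atTop (𝓝 fstar) ∧ Tendsto (s ∘ φ) atTop (𝓝 sstar) := by
  obtain ⟨ψ, hψ, hfψ⟩ := hf.tendsto_subseq
  obtain ⟨sstar, -, χ, hχ, hsχ⟩ := (isCompact_closedBall (0 : Fin n → ℝ) K).tendsto_subseq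
    fun k => mem_closedBall_zero_iff.2
      (hShom.norm_le_of_mem_subdiff hSlip (hI.mem_subdiff (ψ k)))
  exact ⟨ψ ∘ χ, hψ.comp hχ, sstar, hfψ.comp hχ.tendsto_atTop, hsχ⟩

lemma mul_ip_le_of_tendsto (hI : IsInversePowerIteration R S f s) (hRnonneg : ∀ x, 0 ≤ R x)
    (hSpos : ∀ x, x ≠ 0 → 0 < S x) (hShom : PosHomog 1 S) {K : NNReal}
    (hSlip : LipschitzWith K S) {lam : ℝ}
    (hlam : Tendsto (fun k => R (f k) / S (f k)) atTop (𝓝 lam)) {φ : ℕ → ℕ} (hφ : StrictMono φ)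
    {sstar : Fin n → ℝ} (hsφ : Tendsto (s ∘ φ) atTop (𝓝 sstar)) {u : Fin n → ℝ}
    (hu : ∑ i, u i ^ 2 ≤ 1) : lam * ip u sstar ≤ R u := by
  set F := fun k => R (f k) / S (f k)
  have hS_le : ∀ k, S (f k) ≤ K := fun k => by
    have := (le_abs_self _).trans (hSlip.norm_le_mul (hShom.map_zero one_ne_zero) (f k))
    nlinarith [norm_le_one_of_sum_sq_le_one (hI.sum_sq_eq_one k).le, K.coe_nonneg]
  have hstep : ∀ k, (F (φ k + 1) - F (φ k)) * K ≤ R u - F (φ k) * ip u (s (φ k)) := fun k =>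
    (mul_le_mul_of_nonpos_left (hS_le _)
      (sub_nonpos.2 (hI.antitone hRnonneg hSpos hShom (Nat.le_succ _)))).trans
      (hI.step_le hRnonneg hSpos hShom (φ k) hu)
  have hFφ : Tendsto (F ∘ φ) atTop (𝓝 lam) := hlam.comp hφ.tendsto_atTop
  have hFφ_succ : Tendsto (fun k => F (φ k + 1)) atTop (𝓝 lam) :=
    hlam.comp ((tendsto_add_atTop_nat 1).comp hφ.tendsto_atTop)
  have hleft : Tendsto (fun k => (F (φ k + 1) - F (φ k)) * K) atTop (𝓝 ((lam - lam) * K)) :=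
    (hFφ_succ.sub hFφ).mul_const _
  have hright : Tendsto (fun k => R u - F (φ k) * ip u (s (φ k))) atTop
      (𝓝 (R u - lam * ip u sstar)) :=
    tendsto_const_nhds.sub (hFφ.mul
      (((continuous_const.dotProduct continuous_id).tendsto _).comp hsφ))
  have := le_of_tendsto_of_tendsto' hleft hright hstep
  rw [sub_self, zero_mul] at this
  linarith

theorem isEigenvector_of_mapClusterPt (hI : IsInversePowerIteration R S f s)
    (hRnonneg : ∀ x, 0 ≤ R x) (hSpos : ∀ x, x ≠ 0 → 0 < S x) (hRhom : PosHomog 1 R)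
    (hShom : PosHomog 1 S) (hRcont : Continuous R) {K : NNReal} (hSlip : LipschitzWith K S)
    {lam : ℝ} (hlam : Tendsto (fun k => R (f k) / S (f k)) atTop (𝓝 lam))
    {fstar : Fin n → ℝ} (hf : MapClusterPt fstar atTop f) :
    fstar ≠ 0 ∧ lam = R fstar / S fstar ∧
      ∃ rstar ∈ subdiff R fstar, ∃ sstar ∈ subdiff S fstar, rstar - lam • sstar = 0 := by
  obtain ⟨φ, hφ, sstar, hfφ, hsφ⟩ := hI.exists_subseq_tendsto_of_mapClusterPt hShom hSlip hf
  have hne : fstar ≠ 0 := ne_zero_of_sum_sq_eq_one <|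
    isClosed_setOf_sum_sq_eq_one.mem_of_tendsto hfφ (Eventually.of_forall fun k =>
      hI.sum_sq_eq_one (φ k))
  have hSstar := hSpos _ hne
  have hlam_eq : lam = R fstar / S fstar := tendsto_nhds_unique (hlam.comp hφ.tendsto_atTop)
    (((hRcont.tendsto _).comp hfφ).div ((hSlip.continuous.tendsto _).comp hfφ) hSstar.ne')
  have hsstar : sstar ∈ subdiff S fstar :=
    mem_subdiff_of_tendsto hSlip.continuous hfφ hsφ fun k => hI.mem_subdiff (φ k)
  have hle : ∀ u, lam * ip u sstar ≤ R u := hRhom.le_of_forall_sum_sq_le_one fun u hu =>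
    hI.mul_ip_le_of_tendsto hRnonneg hSpos hShom hSlip hlam hφ hsφ hu
  refine ⟨hne, hlam_eq, lam • sstar, mem_subdiff_of_ip_le ?_ fun y => ?_, sstar, hsstar,
    sub_self _⟩
  · rw [ip_smul_left, hShom.ip_eq_of_mem_subdiff hsstar, hlam_eq, div_mul_cancel₀ _ hSstar.ne']
  · rw [ip_smul_left, ip_comm]
    exact hle y

end IsInversePowerIteration

theorem ipm_convergence_p_one_general {n : ℕ} (R S : (Fin n → ℝ) → ℝ)
    (hRlip : ∃ K : NNReal, LipschitzWith K R) (hSlip : ∃ K : NNReal, LipschitzWith K S)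
    (hRnonneg : ∀ x, 0 ≤ R x) (hSnonneg : ∀ x, 0 ≤ S x)
    (hRhom : PosHomog 1 R) (hShom : PosHomog 1 S)
    (hS0 : ∀ g : Fin n → ℝ, S g = 0 ↔ g = 0)
    (f : ℕ → Fin n → ℝ)
    (hnorm : ∀ k, ∑ i, (f k i) ^ 2 = 1)
    (hstep : ∀ k, ∃ s ∈ subdiff S (f k), ∀ u : Fin n → ℝ, (∑ i, (u i) ^ 2) ≤ 1 →
      R (f (k + 1)) - (R (f k) / S (f k)) * ip (f (k + 1)) s ≤
        R u - (R (f k) / S (f k)) * ip u s) :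
    Antitone (fun k => R (f k) / S (f k)) ∧
    ∃ lam : ℝ, Tendsto (fun k => R (f k) / S (f k)) atTop (nhds lam) ∧
      0 ≤ lam ∧ lam ≤ R (f 0) / S (f 0) ∧
      (∃ φ : ℕ → ℕ, StrictMono φ ∧ ∃ g : Fin n → ℝ,
        Tendsto (fun k => f (φ k)) atTop (nhds g)) ∧
      ∀ fstar : Fin n → ℝ, MapClusterPt fstar atTop f →
        fstar ≠ 0 ∧ lam = R fstar / S fstar ∧
        ∃ rstar ∈ subdiff R fstar, ∃ sstar ∈ subdiff S fstar,
          rstar - lam • sstar = 0 := by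
  obtain ⟨KR, hKR⟩ := hRlip
  obtain ⟨KS, hKS⟩ := hSlip
  have hSpos : ∀ x, x ≠ 0 → 0 < S x := fun x hx => (hSnonneg x).lt_of_ne' (mt (hS0 x).1 hx)
  choose s hs hmin using hstep
  have hI : IsInversePowerIteration R S f s := ⟨hnorm, hs, hmin⟩
  have hanti := hI.antitone hRnonneg hSpos hShom
  have hF_nonneg : ∀ k, 0 ≤ R (f k) / S (f k) := fun k => div_nonneg (hRnonneg _) (hSnonneg _)
  have hbdd : BddBelow (Set.range fun k => R (f k) / S (f k)) :=
    ⟨0, Set.forall_mem_range.2 hF_nonneg⟩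
  have hlim := tendsto_atTop_ciInf hanti hbdd
  exact ⟨hanti, _, hlim, le_ciInf hF_nonneg, ciInf_le hbdd 0, hI.exists_tendsto_subseq,
    fun fstar hf => hI.isEigenvector_of_mapClusterPt hRnonneg hSpos hRhom hShom hKR.continuous
      hKS hlim hf⟩

/-- Convergence of the inverse power method for `p = 1`: the values `F(f^k)` decrease
monotonically to some `λ* ∈ [0, F(f^0)]`, the sequence has a convergent subsequence, and
every cluster point `f*` is a nonzero nonlinear eigenvector:
`0 ∈ ∂R(f*) − λ* ∂S(f*)` with `λ* = R(f*)/S(f*)`. -/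
theorem ipm_convergence_p_one {n : ℕ} (R S : (Fin n → ℝ) → ℝ)
    (hRconv : ConvexOn ℝ Set.univ R) (hSconv : ConvexOn ℝ Set.univ S)
    (hRlip : ∃ K : NNReal, LipschitzWith K R) (hSlip : ∃ K : NNReal, LipschitzWith K S)
    (hReven : ∀ x, R (-x) = R x) (hSeven : ∀ x, S (-x) = S x)
    (hRnonneg : ∀ x, 0 ≤ R x) (hSnonneg : ∀ x, 0 ≤ S x)
    (hRhom : PosHomog 1 R) (hShom : PosHomog 1 S)
    (hS0 : ∀ g : Fin n → ℝ, S g = 0 ↔ g = 0)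
    (f : ℕ → Fin n → ℝ)
    (hnorm : ∀ k, ∑ i, (f k i) ^ 2 = 1)
    (hstep : ∀ k, ∃ s ∈ subdiff S (f k), ∀ u : Fin n → ℝ, (∑ i, (u i) ^ 2) ≤ 1 →
      R (f (k + 1)) - (R (f k) / S (f k)) * ip (f (k + 1)) s ≤
        R u - (R (f k) / S (f k)) * ip u s) :
    Antitone (fun k => R (f k) / S (f k)) ∧
    ∃ lam : ℝ, Tendsto (fun k => R (f k) / S (f k)) atTop (nhds lam) ∧
      0 ≤ lam ∧ lam ≤ R (f 0) / S (f 0) ∧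
      (∃ φ : ℕ → ℕ, StrictMono φ ∧ ∃ g : Fin n → ℝ,
        Tendsto (fun k => f (φ k)) atTop (nhds g)) ∧
      ∀ fstar : Fin n → ℝ, MapClusterPt fstar atTop f →
        fstar ≠ 0 ∧ lam = R fstar / S fstar ∧
        ∃ rstar ∈ subdiff R fstar, ∃ sstar ∈ subdiff S fstar,
          rstar - lam • sstar = 0 :=
  ipm_convergence_p_one_general R S hRlip hSlip hRnonneg hSnonneg hRhom hShom hS0 f hnorm hstep
end

section
/- Assume the graph is connected and let f ∈ ℝ^n be a nonconstant eigenvector of the graph 1-Laplacian with eigenvalue λ. Let n₊ = |{i : f_i > 0}|, n₋ = |{i : f_i < 0}|, n₀ = |{i : f_i = 0}|. Then |n₊ − n₋| ≤ n₀; consequently n₊ ≤ n/2, n₋ ≤ n/2, and 0 is a median of f, i.e. 0 minimizes c ↦ Σ_{i=1}^n |f_i − c|. -/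
open Finset

/-- The set-valued sign: `{-1}` for `x < 0`, `{1}` for `x > 0`, `[-1,1]` for `x = 0`. -/
noncomputable def signSet (x : ℝ) : Set ℝ :=
  if x < 0 then {-1} else if 0 < x then {1} else Set.Icc (-1) 1

lemma signSet_pos_eq {x y : ℝ} (hx : 0 < x) (hy : y ∈ signSet x) : y = 1 := by
  simp [signSet, hx, not_lt.2 hx.le] at hy; exact hy

lemma signSet_neg_eq {x y : ℝ} (hx : x < 0) (hy : y ∈ signSet x) : y = -1 := by
  simp [signSet, hx] at hy; exact hy

lemma signSet_abs_le {x y : ℝ} (hy : y ∈ signSet x) : |y| ≤ 1 := by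
  unfold signSet at hy
  split_ifs at hy <;> simp_all [abs_le]

/-- Any nonconstant eigenvector `f` of the graph 1-Laplacian of a connected graph
satisfies `|n₊ − n₋| ≤ n₀`, hence `n₊ ≤ n/2`, `n₋ ≤ n/2`, and `0` is a median of `f`. -/
theorem one_laplacian_eigenvector_median_zero (n : ℕ) (hn : 2 ≤ n)
    (W : Fin n → Fin n → ℝ)
    (hsym : ∀ i j, W i j = W j i) (hnonneg : ∀ i j, 0 ≤ W i j)
    (hconn : ∀ C : Finset (Fin n), C.Nonempty → C ≠ Finset.univ →
      0 < ∑ i ∈ C, ∑ j ∈ Cᶜ, W i j)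
    (f : Fin n → ℝ) (lam : ℝ)
    (hnonconst : ¬ ∃ c : ℝ, ∀ i, f i = c)
    (u : Fin n → Fin n → ℝ)
    (hanti : ∀ i j, u i j = - u j i)
    (husign : ∀ i j, u i j ∈ signSet (f i - f j))
    (α : Fin n → ℝ) (hα : ∀ i, α i ∈ signSet (f i))
    (heig : ∀ i, ∑ j, W i j * u i j = lam * α i) :
    |((Finset.univ.filter (fun i => 0 < f i)).card : ℝ) -
        ((Finset.univ.filter (fun i => f i < 0)).card : ℝ)| ≤
      ((Finset.univ.filter (fun i => f i = 0)).card : ℝ) ∧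
    ((Finset.univ.filter (fun i => 0 < f i)).card : ℝ) ≤ n / 2 ∧
    ((Finset.univ.filter (fun i => f i < 0)).card : ℝ) ≤ n / 2 ∧
    ∀ c : ℝ, ∑ i, |f i| ≤ ∑ i, |f i - c| := by
  have hne : (Finset.univ : Finset (Fin n)).Nonempty :=
    ⟨⟨0, by omega⟩, Finset.mem_univ _⟩
  set P := Finset.univ.filter (fun i => 0 < f i) with hP
  set N := Finset.univ.filter (fun i => f i < 0) with hN
  set Z := Finset.univ.filter (fun i => f i = 0) with hZ
  -- antisymmetric double sums vanish
  have hWU : ∀ S : Finset (Fin n), ∑ i ∈ S, ∑ j ∈ S, W i j * u i j = 0 := by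
    intro S
    have h2 : ∑ i ∈ S, ∑ j ∈ S, W i j * u i j
        = - ∑ i ∈ S, ∑ j ∈ S, W i j * u i j := by
      calc ∑ i ∈ S, ∑ j ∈ S, W i j * u i j
          = ∑ j ∈ S, ∑ i ∈ S, W i j * u i j := Finset.sum_comm
        _ = ∑ j ∈ S, ∑ i ∈ S, -(W j i * u j i) := by
            refine Finset.sum_congr rfl fun j _ => Finset.sum_congr rfl fun i _ => ?_
            rw [hsym i j, hanti i j]; ring
        _ = - ∑ i ∈ S, ∑ j ∈ S, W i j * u i j := by
            simp [Finset.sum_neg_distrib]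
    linarith
  -- lam ≠ 0
  have hlam : lam ≠ 0 := by
    intro h0
    obtain ⟨i0, -, hi0⟩ := Finset.exists_max_image Finset.univ f hne
    set C := Finset.univ.filter (fun i => f i = f i0) with hC
    have hCne : C.Nonempty := ⟨i0, by simp [hC]⟩
    have hCu : C ≠ Finset.univ := by
      intro h
      apply hnonconst
      refine ⟨f i0, fun i => ?_⟩
      have : i ∈ C := h ▸ Finset.mem_univ i
      simpa [hC] using this
    have hpos := hconn C hCne hCu
    have hs : ∑ i ∈ C, ∑ j, W i j * u i j = 0 := by
      simp [heig, h0]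
    have hsplit : ∀ i, ∑ j, W i j * u i j
        = ∑ j ∈ C, W i j * u i j + ∑ j ∈ Cᶜ, W i j * u i j := by
      intro i; exact (Finset.sum_add_sum_compl C _).symm
    have hoff : ∑ i ∈ C, ∑ j ∈ Cᶜ, W i j * u i j = ∑ i ∈ C, ∑ j ∈ Cᶜ, W i j := by
      refine Finset.sum_congr rfl fun i hi => Finset.sum_congr rfl fun j hj => ?_
      have hiC : f i = f i0 := by simpa [hC] using hi
      have hjC : f j ≠ f i0 := by simpa [hC] using hj
      have hjle : f j ≤ f i0 := hi0 j (Finset.mem_univ j)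
      have : 0 < f i - f j := by
        rcases lt_of_le_of_ne hjle hjC with h; linarith
      rw [signSet_pos_eq this (husign i j)]; ring
    rw [Finset.sum_congr rfl (fun i _ => hsplit i), Finset.sum_add_distrib,
      hWU C, hoff, zero_add] at hs
    linarith
  -- split of sums over univ into P, N, Z
  have hNZ : Finset.univ.filter (fun i => ¬ 0 < f i) = N ∪ Z := by
    ext i
    simp only [Finset.mem_filter, Finset.mem_univ, true_and, Finset.mem_union, hN, hZ,
      not_lt]
    constructor
    · intro h; rcases lt_or_eq_of_le h with h | h
      · exact Or.inl h
      · exact Or.inr h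
    · rintro (h | h) <;> linarith
  have hNZdisj : Disjoint N Z := by
    rw [Finset.disjoint_left]
    intro i hiN hiZ
    simp only [hN, hZ, Finset.mem_filter, Finset.mem_univ, true_and] at hiN hiZ
    linarith
  have hsum_split : ∀ g : Fin n → ℝ,
      ∑ i, g i = ∑ i ∈ P, g i + ∑ i ∈ N, g i + ∑ i ∈ Z, g i := by
    intro g
    rw [← Finset.sum_filter_add_sum_filter_not Finset.univ (fun i => 0 < f i) g,
      hNZ, Finset.sum_union hNZdisj]
    ring
  -- sum of α is zero
  have hαsum : ∑ i, α i = 0 := by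
    have h1 : lam * ∑ i, α i = 0 := by
      rw [Finset.mul_sum]
      rw [← Finset.sum_congr rfl (fun i (_ : i ∈ Finset.univ) => heig i)]
      exact hWU Finset.univ
    rcases mul_eq_zero.1 h1 with h | h
    · exact absurd h hlam
    · exact h
  have hαP : ∑ i ∈ P, α i = (P.card : ℝ) := by
    rw [Finset.sum_congr rfl (fun i hi => ?_)]
    · rw [Finset.sum_const, nsmul_eq_mul, mul_one]
    · exact signSet_pos_eq (by simpa [hP] using hi) (hα i)
  have hαN : ∑ i ∈ N, α i = -(N.card : ℝ) := by
    rw [Finset.sum_congr rfl (fun i hi => ?_)]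
    · rw [Finset.sum_const, nsmul_eq_mul, mul_neg_one]
    · exact signSet_neg_eq (by simpa [hN] using hi) (hα i)
  have hαZ : |∑ i ∈ Z, α i| ≤ (Z.card : ℝ) := by
    calc |∑ i ∈ Z, α i| ≤ ∑ i ∈ Z, |α i| := Finset.abs_sum_le_sum_abs _ _
      _ ≤ ∑ i ∈ Z, 1 := Finset.sum_le_sum fun i _ => signSet_abs_le (hα i)
      _ = (Z.card : ℝ) := by rw [Finset.sum_const, nsmul_eq_mul, mul_one]
  have hmain : |(P.card : ℝ) - (N.card : ℝ)| ≤ (Z.card : ℝ) := by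
    have := hsum_split α
    rw [hαsum, hαP, hαN] at this
    have : (P.card : ℝ) - (N.card : ℝ) = -∑ i ∈ Z, α i := by linarith
    rw [this, abs_neg]
    exact hαZ
  -- cardinality identity
  have hcard : (P.card : ℝ) + (N.card : ℝ) + (Z.card : ℝ) = n := by
    have := hsum_split (fun _ => (1 : ℝ))
    simpa [Finset.sum_const, nsmul_eq_mul] using this.symm
  have habs := abs_le.1 hmain
  refine ⟨hmain, by linarith [habs.1, habs.2], by linarith [habs.1, habs.2], ?_⟩
  -- median
  intro c
  rcases le_total 0 c with hc | hc
  · -- c ≥ 0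
    have key : ∀ i, |f i| + (if 0 < f i then -c else c) ≤ |f i - c| := by
      intro i
      by_cases h : 0 < f i
      · simp only [if_pos h]
        have h1 : |f i| - |c| ≤ |f i - c| := abs_sub_abs_le_abs_sub _ _
        rw [abs_of_nonneg hc] at h1
        linarith
      · simp only [if_neg h]
        push_neg at h
        rw [abs_of_nonpos h, abs_of_nonpos (by linarith : f i - c ≤ 0)]
        linarith
    calc ∑ i, |f i| = ∑ i, (|f i| + (if 0 < f i then -c else c))
          - ∑ i, (if 0 < f i then -c else c) := by
            rw [Finset.sum_add_distrib]; ring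
      _ ≤ ∑ i, |f i - c| - 0 := by
            have h1 : ∑ i, (|f i| + (if 0 < f i then -c else c)) ≤ ∑ i, |f i - c| :=
              Finset.sum_le_sum fun i _ => key i
            have h2 : 0 ≤ ∑ i, (if 0 < f i then -c else c) := by
              rw [Finset.sum_ite, Finset.sum_const, Finset.sum_const, nsmul_eq_mul,
                nsmul_eq_mul, hNZ, Finset.card_union_of_disjoint hNZdisj]
              push_cast
              nlinarith [habs.1, habs.2]
            linarith
      _ = ∑ i, |f i - c| := by ring
  · have hPZ : Finset.univ.filter (fun i => ¬ f i < 0) = P ∪ Z := by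
      ext i
      simp only [Finset.mem_filter, Finset.mem_univ, true_and, Finset.mem_union, hP, hZ,
        not_lt]
      constructor
      · intro h; rcases lt_or_eq_of_le h with h | h
        · exact Or.inl h
        · exact Or.inr h.symm
      · rintro (h | h) <;> linarith
    have hPZdisj : Disjoint P Z := by
      rw [Finset.disjoint_left]
      intro i hiP hiZ
      simp only [hP, hZ, Finset.mem_filter, Finset.mem_univ, true_and] at hiP hiZ
      linarith
    have key : ∀ i, |f i| + (if f i < 0 then c else -c) ≤ |f i - c| := by
      intro i
      by_cases h : f i < 0
      · simp only [if_pos h]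
        have h1 : |f i| - |c| ≤ |f i - c| := abs_sub_abs_le_abs_sub _ _
        rw [abs_of_nonpos hc] at h1
        linarith
      · simp only [if_neg h]
        push_neg at h
        rw [abs_of_nonneg h, abs_of_nonneg (by linarith : 0 ≤ f i - c)]
        linarith
    calc ∑ i, |f i| = ∑ i, (|f i| + (if f i < 0 then c else -c))
          - ∑ i, (if f i < 0 then c else -c) := by
            rw [Finset.sum_add_distrib]; ring
      _ ≤ ∑ i, |f i - c| - 0 := by
            have h1 : ∑ i, (|f i| + (if f i < 0 then c else -c)) ≤ ∑ i, |f i - c| :=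
              Finset.sum_le_sum fun i _ => key i
            have h2 : 0 ≤ ∑ i, (if f i < 0 then c else -c) := by
              rw [Finset.sum_ite, Finset.sum_const, Finset.sum_const, nsmul_eq_mul,
                nsmul_eq_mul, hPZ, Finset.card_union_of_disjoint hPZdisj]
              push_cast
              nlinarith [habs.1, habs.2]
            linarith
      _ = ∑ i, |f i - c| := by ring
end

section
/- Assume the graph is connected and n ≥ 2. Then the set of eigenvalues λ of the graph 1-Laplacian admitting a nonconstant eigenvector is nonempty, and its minimum equals the optimal ratio Cheeger cut h_RCC: every nonconstant eigenvector of the 1-Laplacian has eigenvalue ≥ h_RCC, and there exists a nonconstant eigenvector of the 1-Laplacian with eigenvalue exactly h_RCC. -/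
open Finset

/-- Ratio Cheeger cut of the partition `(C, Cᶜ)`. -/
noncomputable def RCC {n : ℕ} (W : Fin n → Fin n → ℝ) (C : Finset (Fin n)) : ℝ :=
  (∑ i ∈ C, ∑ j ∈ Cᶜ, W i j) / min (C.card : ℝ) (Cᶜ.card : ℝ)

/-- `f` is an eigenvector of the graph 1-Laplacian with eigenvalue `lam`. -/
def IsEig1Lap {n : ℕ} (W : Fin n → Fin n → ℝ) (f : Fin n → ℝ) (lam : ℝ) : Prop :=
  ∃ u : Fin n → Fin n → ℝ, (∀ i j, u i j = - u j i) ∧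
    (∀ i j, u i j ∈ signSet (f i - f j)) ∧
    ∃ α : Fin n → ℝ, (∀ i, α i ∈ signSet (f i)) ∧
      ∀ i, ∑ j, W i j * u i j = lam * α i

/-!
Lower bound. Pairing the eigen-equation with `f` gives `∑ wᵢⱼ |fᵢ - fⱼ| = 2λ ∑ |fᵢ|`, which
is positive on a connected graph, so `λ > 0`; summing the equation gives `λ ∑ αᵢ = 0`, hence
`∑ αᵢ = 0`, and so at most half of the entries of `f` are positive and at most half negative.
The layer-cake (co-area) decomposition writes `f` as a nonnegative combination of level vectors
`±1_S` with `2|S| ≤ n`, and for those `∑ wᵢⱼ |fᵢ - fⱼ| ≥ 2h ∑ |fᵢ|` is the definition of `h`.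

Attainment. For an optimal `C` with `|C| ≤ |Cᶜ|`, `1_C` is an eigenvector for `h`. The
admissible `(u, α)` form a compact convex set, so by Hahn–Banach it suffices that for every `y`
some admissible pair has nonnegative residual against `y`. For the maximising pair this residual
is a positively homogeneous, piecewise linear function of `y`, and the layer-cake decomposition
reduces it to `y = 1_S - e`, where it follows from `h |C ∩ S| ≤ cut (C ∩ S)` and
`h (|C| - |Cᶜ ∩ S|) ≤ cut (C ∪ S)`.
-/

theorem mem_signSet_iff {u x : ℝ} : u ∈ signSet x ↔ |u| ≤ 1 ∧ u * x = |x| := by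
  unfold signSet
  rcases lt_trichotomy x 0 with hx | rfl | hx
  · rw [if_pos hx, Set.mem_singleton_iff, abs_of_neg hx]
    constructor
    · rintro rfl; norm_num
    · rintro ⟨-, h⟩; nlinarith
  · simp [abs_le]
  · rw [if_neg hx.not_gt, if_pos hx, Set.mem_singleton_iff, abs_of_pos hx]
    constructor
    · rintro rfl; norm_num
    · rintro ⟨-, h⟩; nlinarith

theorem neg_mem_signSet_neg {u x : ℝ} (h : u ∈ signSet x) : -u ∈ signSet (-x) := by
  rw [mem_signSet_iff] at h ⊢
  rw [abs_neg, abs_neg, neg_mul_neg]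
  exact h

theorem isCompact_signSet (x : ℝ) : IsCompact (signSet x) := by
  have hset : signSet x = Set.Icc (-1) 1 ∩ {u | u * x = |x|} := by
    ext u
    rw [mem_signSet_iff, abs_le]
    rfl
  rw [hset]
  exact isCompact_Icc.inter_right (isClosed_eq (by fun_prop) continuous_const)

theorem convex_signSet (x : ℝ) : Convex ℝ (signSet x) := by
  unfold signSet
  split_ifs
  exacts [convex_singleton _, convex_singleton _, convex_Icc _ _]

theorem Real.sign_mul_self (x : ℝ) : Real.sign x * x = |x| := by
  rcases lt_trichotomy x 0 with hx | rfl | hx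
  · rw [Real.sign_of_neg hx, abs_of_neg hx]; ring
  · simp
  · rw [Real.sign_of_pos hx, abs_of_pos hx]; ring

theorem Real.sign_mul_of_pos {c : ℝ} (hc : 0 < c) (x : ℝ) :
    Real.sign (c * x) = Real.sign x := by
  rcases lt_trichotomy x 0 with hx | rfl | hx
  · rw [Real.sign_of_neg hx, Real.sign_of_neg (mul_neg_of_pos_of_neg hc hx)]
  · simp
  · rw [Real.sign_of_pos hx, Real.sign_of_pos (mul_pos hc hx)]

/-- The sign of `(a, x)` in the lexicographic order; `lexSign a x * x` is the maximum of `u * x`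
over `u ∈ signSet a`. -/
noncomputable def lexSign (a x : ℝ) : ℝ := if a = 0 then Real.sign x else Real.sign a

theorem lexSign_mem_signSet (a x : ℝ) : lexSign a x ∈ signSet a := by
  rw [mem_signSet_iff, lexSign]
  split_ifs with ha
  · subst ha
    rcases Real.sign_apply_eq x with h | h | h <;> simp [h]
  · refine ⟨?_, Real.sign_mul_self a⟩
    rcases Real.sign_apply_eq a with h | h | h <;> simp [h]

theorem lexSign_neg (a x : ℝ) : lexSign (-a) (-x) = -lexSign a x := by
  simp only [lexSign, neg_eq_zero, Real.sign_neg]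
  split_ifs <;> rfl

def IsPosHomogeneous (φ : ℝ → ℝ) : Prop := ∀ c x, 0 ≤ c → φ (c * x) = c * φ x

theorem isPosHomogeneous_lexSign_mul (a : ℝ) : IsPosHomogeneous fun x => lexSign a x * x := by
  intro c x hc
  rcases hc.eq_or_lt with rfl | hc
  · simp
  · simp only [lexSign]
    split_ifs
    · rw [Real.sign_mul_of_pos hc]; ring
    · ring

theorem IsPosHomogeneous.comp_neg {φ : ℝ → ℝ} (hφ : IsPosHomogeneous φ) :
    IsPosHomogeneous fun x => φ (-x) := by
  intro c x hc
  simp only [← hφ c (-x) hc, mul_neg]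

theorem IsPosHomogeneous.const_mul {φ : ℝ → ℝ} (hφ : IsPosHomogeneous φ) (a : ℝ) :
    IsPosHomogeneous fun x => a * φ x := by
  intro c x hc
  simp only [hφ c x hc]; ring

theorem isPosHomogeneous_abs : IsPosHomogeneous fun x => |x| := by
  intro c x hc
  simp only [abs_mul, abs_of_nonneg hc]

theorem IsPosHomogeneous.apply_of_nonneg {φ : ℝ → ℝ} (hφ : IsPosHomogeneous φ) {x : ℝ}
    (hx : 0 ≤ x) : φ x = x * φ 1 := by
  simpa using hφ x 1 hx

theorem sum_range_sub_mul_ite_lt {t : ℕ → ℝ} {m k₀ : ℕ} (hk₀ : k₀ ≤ m)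
    (ht : ∀ k ≤ m, ∀ l ≤ m, t k < t l ↔ k < l) :
    ∑ k ∈ range m, (t (k + 1) - t k) * (if t k < t k₀ then 1 else 0) = t k₀ - t 0 := by
  have hfilter : (range m).filter (· < k₀) = range k₀ := by
    ext k; simp only [mem_filter, mem_range]; omega
  calc ∑ k ∈ range m, (t (k + 1) - t k) * (if t k < t k₀ then 1 else 0)
      = ∑ k ∈ range m, if k < k₀ then t (k + 1) - t k else 0 := by
        refine sum_congr rfl fun k hk => ?_
        simp only [ht k (by simp at hk; omega) k₀ hk₀, mul_ite, mul_one, mul_zero]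
    _ = t k₀ - t 0 := by rw [← sum_filter, hfilter, sum_range_sub]

theorem exists_layerCake (B : Finset ℝ) :
    ∃ (m : ℕ) (c t : ℕ → ℝ), (∀ k ∈ range m, 0 ≤ c k) ∧ ∀ p ∈ B, ∀ q ∈ B,
      ∑ k ∈ range m, c k * ((if t k < p then 1 else 0) - (if t k < q then 1 else 0)) =
        p - q := by
  rcases B.eq_empty_or_nonempty with rfl | hB
  · exact ⟨0, 0, 0, by simp, by simp⟩
  let e := B.orderEmbOfFin rfl
  let t : ℕ → ℝ := fun k => if h : k < #B then e ⟨k, h⟩ else 0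
  have hm : #B - 1 < #B := Nat.sub_lt hB.card_pos one_pos
  have ht : ∀ k ≤ #B - 1, ∀ l ≤ #B - 1, t k < t l ↔ k < l := fun k hk l hl => by
    simp only [t, dif_pos (hk.trans_lt hm), dif_pos (hl.trans_lt hm), e.lt_iff_lt,
      Fin.mk_lt_mk]
  have hmem : ∀ p ∈ B, ∃ k ≤ #B - 1, t k = p := fun p hp => by
    rw [← Finset.mem_coe, ← B.range_orderEmbOfFin rfl] at hp
    obtain ⟨⟨k, hk⟩, rfl⟩ := hp
    exact ⟨k, by omega, dif_pos hk⟩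
  refine ⟨#B - 1, fun k => t (k + 1) - t k, t, fun k hk => ?_, fun p hp q hq => ?_⟩
  · rw [mem_range] at hk
    exact sub_nonneg.2 ((ht k hk.le (k + 1) hk).2 k.lt_succ_self).le
  · obtain ⟨k, hk, rfl⟩ := hmem p hp
    obtain ⟨l, hl, rfl⟩ := hmem q hq
    simp only [mul_sub, sum_sub_distrib, sum_range_sub_mul_ite_lt hk ht,
      sum_range_sub_mul_ite_lt hl ht]
    ring

/-- Every layer of `p - q` has the sign of `p - q`, so positively homogeneous functions pass
through the decomposition. -/
theorem exists_layerCake_posHomogeneous (B : Finset ℝ) :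
    ∃ (m : ℕ) (c t : ℕ → ℝ), (∀ k ∈ range m, 0 ≤ c k) ∧
      ∀ φ, IsPosHomogeneous φ → ∀ p ∈ B, ∀ q ∈ B,
        ∑ k ∈ range m, c k * φ ((if t k < p then 1 else 0) - (if t k < q then 1 else 0)) =
          φ (p - q) := by
  obtain ⟨m, c, t, hc, hsum⟩ := exists_layerCake B
  have hle : ∀ φ, IsPosHomogeneous φ → ∀ p ∈ B, ∀ q ∈ B, q ≤ p →
      ∑ k ∈ range m, c k * φ ((if t k < p then 1 else 0) - (if t k < q then 1 else 0)) =
        φ (p - q) := by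
    intro φ hφ p hp q hq hqp
    have hlayer : ∀ k, 0 ≤ (if t k < p then (1 : ℝ) else 0) - (if t k < q then 1 else 0) :=
      fun k => by
        split_ifs with h₁ h₂ h₂ <;> norm_num
        exact h₁ (h₂.trans_le hqp)
    simp only [hφ.apply_of_nonneg (hlayer _), ← mul_assoc, ← sum_mul, hsum p hp q hq]
    exact (hφ.apply_of_nonneg (sub_nonneg.2 hqp)).symm
  refine ⟨m, c, t, hc, fun φ hφ p hp q hq => ?_⟩
  rcases le_total q p with hqp | hpq
  · exact hle φ hφ p hp q hq hqp
  · simpa using hle _ hφ.comp_neg q hq p hp hpq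

section Coarea

variable {ι : Type*} [Fintype ι]

noncomputable def levelVec (y : ι → ℝ) (t : ℝ) (i : ι) : ℝ :=
  (if t < y i then 1 else 0) - (if t < 0 then 1 else 0)

theorem coarea_nonneg (y : ι → ℝ) {φ : ι → ι → ℝ → ℝ} {ψ : ι → ℝ → ℝ}
    (hφ : ∀ i j, IsPosHomogeneous (φ i j)) (hψ : ∀ i, IsPosHomogeneous (ψ i))
    (hlevel : ∀ t, 0 ≤ ∑ i, ∑ j, φ i j (levelVec y t i - levelVec y t j) +
      ∑ i, ψ i (levelVec y t i)) :
    0 ≤ ∑ i, ∑ j, φ i j (y i - y j) + ∑ i, ψ i (y i) := by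
  classical
  obtain ⟨m, c, t, hc, hlayer⟩ := exists_layerCake_posHomogeneous (insert 0 (univ.image y))
  have hy : ∀ i, y i ∈ insert 0 (univ.image y) := fun i => mem_insert_of_mem (by simp)
  have hpair : ∀ i j, φ i j (y i - y j) =
      ∑ k ∈ range m, c k * φ i j (levelVec y (t k) i - levelVec y (t k) j) := fun i j => by
    simp only [levelVec, sub_sub_sub_cancel_right, hlayer _ (hφ i j) _ (hy i) _ (hy j)]
  have hsingle : ∀ i, ψ i (y i) = ∑ k ∈ range m, c k * ψ i (levelVec y (t k) i) :=
    fun i => by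
    simpa [levelVec] using (hlayer _ (hψ i) _ (hy i) 0 (mem_insert_self _ _)).symm
  have hsplit : ∑ i, ∑ j, φ i j (y i - y j) + ∑ i, ψ i (y i) =
      ∑ k ∈ range m, c k * (∑ i, ∑ j, φ i j (levelVec y (t k) i - levelVec y (t k) j) +
        ∑ i, ψ i (levelVec y (t k) i)) := by
    simp only [hpair, hsingle, mul_add, mul_sum, sum_add_distrib]
    congr 1
    · exact (sum_congr rfl fun i _ => sum_comm).trans sum_comm
    · exact sum_comm
  rw [hsplit]
  exact sum_nonneg fun k hk => mul_nonneg (hc k hk) (hlevel _)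

end Coarea

section Cut

variable {ι : Type*} [DecidableEq ι]

noncomputable def chi (S : Finset ι) (i : ι) : ℝ := if i ∈ S then 1 else 0

theorem abs_chi (S : Finset ι) (i : ι) : |chi S i| = chi S i := by
  by_cases hi : i ∈ S <;> simp [chi, hi]

variable [Fintype ι] (W : ι → ι → ℝ)

noncomputable def cut (S : Finset ι) : ℝ := ∑ i ∈ S, ∑ j ∈ Sᶜ, W i j

/-- A division-free form of `h ≤ RCC W T` for all nonempty proper `T`; the case `T = ∅` forces
`0 ≤ h`. -/
def IsRatioCutLowerBound (h : ℝ) : Prop :=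
  ∀ (T : Finset ι) (m : ℝ), m ≤ #T → m ≤ #Tᶜ → h * m ≤ cut W T

variable {W}

theorem abs_chi_sub_one (S : Finset ι) (i : ι) : |chi S i - 1| = chi Sᶜ i := by
  by_cases hi : i ∈ S <;> simp [chi, hi]

theorem cut_nonneg (hnonneg : ∀ i j, 0 ≤ W i j) (S : Finset ι) : 0 ≤ cut W S :=
  sum_nonneg fun i _ => sum_nonneg fun j _ => hnonneg i j

theorem cut_compl (hsym : ∀ i j, W i j = W j i) (S : Finset ι) : cut W Sᶜ = cut W S := by
  rw [cut, compl_compl, sum_comm]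
  exact sum_congr rfl fun i _ => sum_congr rfl fun j _ => hsym j i

theorem sum_sum_mul_chi_mul_chi (S T : Finset ι) :
    ∑ i, ∑ j, W i j * (chi S i * chi T j) = ∑ i ∈ S, ∑ j ∈ T, W i j := by
  simp [chi, mul_ite]

theorem sum_sum_mul_abs_chi_sub_chi (hsym : ∀ i j, W i j = W j i) (S : Finset ι) :
    ∑ i, ∑ j, W i j * |chi S i - chi S j| = 2 * cut W S := by
  have hpoint : ∀ i j, |chi S i - chi S j| = chi S i * chi Sᶜ j + chi Sᶜ i * chi S j := by
    intro i j
    by_cases hi : i ∈ S <;> by_cases hj : j ∈ S <;> simp [chi, hi, hj]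
  simp only [hpoint, mul_add, sum_add_distrib, sum_sum_mul_chi_mul_chi]
  rw [← cut, two_mul, ← cut_compl hsym S, cut, compl_compl]

theorem not_exists_const_chi {C : Finset ι} (hne : C.Nonempty) (huniv : C ≠ univ) :
    ¬∃ c, ∀ i, chi C i = c := by
  rintro ⟨c, hc⟩
  obtain ⟨i, hi⟩ := hne
  obtain ⟨j, hj⟩ := (compl_ne_univ_iff_nonempty Cᶜ).1 (by rwa [compl_compl])
  have hi' := hc i
  have hj' := hc j
  simp only [chi, hi, if_true, mem_compl.1 hj, if_false] at hi' hj'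
  linarith

theorem sum_chi (S : Finset ι) : ∑ i, chi S i = #S := by
  simp [chi]

end Cut

section Antisymm

variable {ι : Type*} [Fintype ι]

theorem sum_sum_mul_sub_of_antisymm {a : ι → ι → ℝ} (ha : ∀ i j, a i j = -a j i)
    (y : ι → ℝ) :
    ∑ i, ∑ j, a i j * (y i - y j) = 2 * ∑ i, (∑ j, a i j) * y i := by
  have hswap : ∑ i, ∑ j, a i j * y j = -∑ i, ∑ j, a i j * y i := by
    rw [sum_comm, ← sum_neg_distrib]
    exact sum_congr rfl fun i _ => by rw [← sum_neg_distrib]; simp [ha i]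
  simp only [mul_sub, sum_sub_distrib, hswap, sum_mul]
  ring

theorem sum_sum_eq_zero_of_antisymm {a : ι → ι → ℝ} (ha : ∀ i j, a i j = -a j i) :
    ∑ i, ∑ j, a i j = 0 := by
  simpa using (sum_sum_mul_sub_of_antisymm ha fun _ => 1).symm

end Antisymm

section LowerBound

variable {ι : Type*} [Fintype ι] [DecidableEq ι] {W : ι → ι → ℝ}

theorem two_mul_card_pos_le_of_sum_eq_zero {f α : ι → ℝ} (hα : ∀ i, α i ∈ signSet (f i))
    (hsum : ∑ i, α i = 0) : 2 * #{i | 0 < f i} ≤ Fintype.card ι := by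
  have hle : ∀ i, 2 * chi {i | 0 < f i} i - 1 ≤ α i := fun i => by
    obtain ⟨hαle, hαf⟩ := mem_signSet_iff.1 (hα i)
    by_cases hfi : 0 < f i
    · rw [abs_of_pos hfi] at hαf
      have hα1 : α i = 1 := mul_right_cancel₀ hfi.ne' (hαf.trans (one_mul _).symm)
      simp [chi, hfi, hα1, one_add_one_eq_two]
    · simp [chi, hfi, (abs_le.1 hαle).1]
  have := sum_le_sum fun i (_ : i ∈ univ) => hle i
  rw [hsum, sum_sub_distrib, ← mul_sum, sum_chi] at this
  simp only [sum_const, card_univ, nsmul_eq_mul, mul_one] at this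
  exact_mod_cast (by linarith : (2 * #{i | 0 < f i} : ℝ) ≤ Fintype.card ι)

theorem exists_weight_pos_of_not_const
    (hconn : ∀ C : Finset ι, C.Nonempty → C ≠ univ → 0 < cut W C) {f : ι → ℝ}
    (hf : ¬∃ c, ∀ i, f i = c) : ∃ i j, 0 < W i j ∧ f j < f i := by
  have : Nonempty ι := by
    by_contra hempty
    exact hf ⟨0, fun i => (hempty ⟨i⟩).elim⟩
  obtain ⟨i₀, hi₀⟩ := Finite.exists_min f
  set T : Finset ι := {i | f i₀ < f i}
  have hT : T.Nonempty := by
    by_contra hT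
    refine hf ⟨f i₀, fun i => le_antisymm ?_ (hi₀ i)⟩
    by_contra hi
    exact hT ⟨i, by simpa [T] using hi⟩
  have hTuniv : T ≠ univ := fun h => by
    have : i₀ ∈ T := h ▸ mem_univ i₀
    simp [T] at this
  obtain ⟨i, hiT, hi⟩ := exists_lt_of_sum_lt (s := T) (f := fun _ => (0 : ℝ))
    (g := fun i => ∑ j ∈ Tᶜ, W i j) (by rw [sum_const_zero]; exact hconn T hT hTuniv)
  obtain ⟨j, hjT, hij⟩ := exists_lt_of_sum_lt (s := Tᶜ) (f := fun _ => (0 : ℝ)) (g := W i)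
    (by rwa [sum_const_zero])
  refine ⟨i, j, hij, ?_⟩
  simp only [T, mem_compl, mem_filter, mem_univ, true_and, not_lt] at hiT hjT
  linarith

theorem sum_sum_mul_abs_sub_pos (hnonneg : ∀ i j, 0 ≤ W i j)
    (hconn : ∀ C : Finset ι, C.Nonempty → C ≠ univ → 0 < cut W C) {f : ι → ℝ}
    (hf : ¬∃ c, ∀ i, f i = c) : 0 < ∑ i, ∑ j, W i j * |f i - f j| := by
  have hterm : ∀ i j, 0 ≤ W i j * |f i - f j| := fun i j =>
    mul_nonneg (hnonneg i j) (abs_nonneg _)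
  obtain ⟨i, j, hij, hfij⟩ := exists_weight_pos_of_not_const hconn hf
  refine sum_pos' (fun i _ => sum_nonneg fun j _ => hterm i j) ⟨i, mem_univ i, ?_⟩
  refine sum_pos' (fun j _ => hterm i j) ⟨j, mem_univ j, ?_⟩
  exact mul_pos hij (abs_pos.2 (sub_ne_zero.2 hfij.ne'))

theorem IsRatioCutLowerBound.mul_sum_abs_le (hsym : ∀ i j, W i j = W j i) {h : ℝ}
    (hh : IsRatioCutLowerBound W h) (y : ι → ℝ)
    (hpos : 2 * #{i | 0 < y i} ≤ Fintype.card ι)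
    (hneg : 2 * #{i | y i < 0} ≤ Fintype.card ι) :
    h * (2 * ∑ i, |y i|) ≤ ∑ i, ∑ j, W i j * |y i - y j| := by
  have key := coarea_nonneg y (φ := fun i j x => W i j * |x|) (ψ := fun _ x => -(2 * h) * |x|)
    (fun i j => isPosHomogeneous_abs.const_mul _)
    (fun _ => isPosHomogeneous_abs.const_mul _) ?_
  · rw [← mul_sum] at key
    linarith
  intro t
  set S := univ.filter fun i => t < y i
  have hlevel : ∀ i, levelVec y t i = chi S i - (if t < 0 then 1 else 0) := fun i => by
    simp [levelVec, chi, S]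
  have htv : ∑ i, ∑ j, W i j * |levelVec y t i - levelVec y t j| = 2 * cut W S := by
    simp only [hlevel, sub_sub_sub_cancel_right, sum_sum_mul_abs_chi_sub_chi hsym]
  have hcard := card_add_card_compl S
  rw [htv, ← mul_sum]
  split_ifs at hlevel with ht
  · have hsub : Sᶜ ⊆ univ.filter fun i => y i < 0 := fun i => by
      simp only [S, mem_compl, mem_filter, mem_univ, true_and, not_lt]
      intro hi; linarith
    have hcut := hh S #Sᶜ
      (by exact_mod_cast (by linarith [card_le_card hsub] : #Sᶜ ≤ #S)) le_rfl
    simp only [hlevel, abs_chi_sub_one, sum_chi]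
    linarith
  · have hsub : S ⊆ univ.filter fun i => 0 < y i := fun i => by
      simp only [S, mem_filter, mem_univ, true_and]
      intro hi; linarith
    have hcut := hh S #S le_rfl
      (by exact_mod_cast (by linarith [card_le_card hsub] : #S ≤ #Sᶜ))
    simp only [hlevel, sub_zero, abs_chi, sum_chi]
    linarith

end LowerBound

theorem exists_mem_map_eq_zero_of_forall_exists {E ι : Type*} [NormedAddCommGroup E]
    [NormedSpace ℝ E] [FiniteDimensional ℝ E] [Fintype ι] {K : Set E} (hK : IsCompact K)
    (hconv : Convex ℝ K) (Φ : E →ₗ[ℝ] ι → ℝ)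
    (h : ∀ y : ι → ℝ, ∃ k ∈ K, 0 ≤ ∑ i, Φ k i * y i) :
    ∃ k ∈ K, Φ k = 0 := by
  classical
  by_contra hne
  obtain ⟨ψ, s, hψ, hs⟩ := geometric_hahn_banach_closed_point (hconv.linear_image Φ)
    (hK.image Φ.continuous_of_finiteDimensional).isClosed
    fun ⟨k, hk, hk0⟩ => hne ⟨k, hk, hk0⟩
  obtain ⟨k, hk, hnonneg⟩ := h fun i => ψ fun j => if i = j then 1 else 0
  have hψk : ψ (Φ k) = ∑ i, Φ k i * ψ fun j => if i = j then 1 else 0 :=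
    ψ.toLinearMap.pi_apply_eq_sum_univ (Φ k)
  linarith [hψ _ ⟨k, hk, rfl⟩, map_zero ψ]

section SignPairs

variable {ι : Type*}

def signPairs (f : ι → ℝ) : Set ((ι → ι → ℝ) × (ι → ℝ)) :=
  {p | (∀ i j, p.1 i j = -p.1 j i) ∧ (∀ i j, p.1 i j ∈ signSet (f i - f j)) ∧
    ∀ i, p.2 i ∈ signSet (f i)}

theorem isCompact_signPairs (f : ι → ℝ) : IsCompact (signPairs f) := by
  have hset : signPairs f =
      ((Set.univ.pi fun i => Set.univ.pi fun j => signSet (f i - f j)) ×ˢ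
        Set.univ.pi fun i => signSet (f i)) ∩ {p | ∀ i j, p.1 i j = -p.1 j i} := by
    ext p
    simp only [signPairs, Set.mem_inter_iff, Set.mem_prod, Set.mem_pi, Set.mem_univ,
      forall_const, Set.mem_ofPred_eq]
    tauto
  rw [hset]
  refine ((isCompact_univ_pi fun i => isCompact_univ_pi fun j => isCompact_signSet _).prod
    (isCompact_univ_pi fun i => isCompact_signSet _)).inter_right ?_
  simp only [Set.ofPred_forall]
  exact isClosed_iInter fun i => isClosed_iInter fun j =>
    isClosed_eq (by fun_prop) (by fun_prop)

theorem convex_signPairs (f : ι → ℝ) : Convex ℝ (signPairs f) := by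
  rintro p ⟨hp, hpu, hpα⟩ q ⟨hq, hqu, hqα⟩ a b ha hb hab
  refine ⟨fun i j => ?_, fun i j => convex_signSet _ (hpu i j) (hqu i j) ha hb hab,
    fun i => convex_signSet _ (hpα i) (hqα i) ha hb hab⟩
  simp only [Prod.fst_add, Prod.smul_fst, Pi.add_apply, Pi.smul_apply, smul_eq_mul, hp i j,
    hq i j]
  ring

variable [Fintype ι]

def eigenResidual (W : ι → ι → ℝ) (lam : ℝ) : (ι → ι → ℝ) × (ι → ℝ) →ₗ[ℝ] ι → ℝ where
  toFun p i := ∑ j, W i j * p.1 i j - lam * p.2 i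
  map_add' p q := by ext i; simp only [Prod.fst_add, Prod.snd_add, Pi.add_apply, mul_add,
    sum_add_distrib]; ring
  map_smul' c p := by ext i; simp only [Prod.smul_fst, Prod.smul_snd, Pi.smul_apply,
    smul_eq_mul, RingHom.id_apply, mul_sub, mul_sum, mul_left_comm c]

end SignPairs

section Indicator

variable {ι : Type*} [Fintype ι] [DecidableEq ι] {W : ι → ι → ℝ}

theorem sum_sum_mul_lexSign_chi (hsym : ∀ i j, W i j = W j i) (C S : Finset ι) :
    ∑ i, ∑ j, W i j *
      (lexSign (chi C i - chi C j) (chi S i - chi S j) * (chi S i - chi S j)) =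
      2 * (cut W (C ∩ S) + cut W (C ∪ S) - cut W C) := by
  have hpoint : ∀ i j, lexSign (chi C i - chi C j) (chi S i - chi S j) * (chi S i - chi S j) =
      |chi (C ∩ S) i - chi (C ∩ S) j| + |chi (C ∪ S) i - chi (C ∪ S) j| -
        |chi C i - chi C j| := fun i j => by
    by_cases hiC : i ∈ C <;> by_cases hjC : j ∈ C <;> by_cases hiS : i ∈ S <;>
      by_cases hjS : j ∈ S <;> simp [lexSign, chi, hiC, hjC, hiS, hjS, Real.sign_neg]
  simp only [hpoint, mul_sub, mul_add, sum_add_distrib, sum_sub_distrib,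
    sum_sum_mul_abs_chi_sub_chi hsym]

theorem sum_lexSign_chi_neg_chi (C S : Finset ι) :
    ∑ i, lexSign (chi C i) (-chi S i) * -chi S i = #(Cᶜ ∩ S) - #(C ∩ S) := by
  have hpoint : ∀ i, lexSign (chi C i) (-chi S i) * -chi S i =
      chi (Cᶜ ∩ S) i - chi (C ∩ S) i := fun i => by
    by_cases hiC : i ∈ C <;> by_cases hiS : i ∈ S <;> simp [lexSign, chi, hiC, hiS, Real.sign_neg]
  simp only [hpoint, sum_sub_distrib, sum_chi]

theorem sum_lexSign_chi_one_sub_chi (C S : Finset ι) :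
    ∑ i, lexSign (chi C i) (-(chi S i - 1)) * -(chi S i - 1) = #Sᶜ := by
  have hpoint : ∀ i, lexSign (chi C i) (-(chi S i - 1)) * -(chi S i - 1) = chi Sᶜ i := fun i => by
    by_cases hiC : i ∈ C <;> by_cases hiS : i ∈ S <;> simp [lexSign, chi, hiC, hiS]
  simp only [hpoint, sum_chi]

end Indicator

section Eig1Lap

variable {n : ℕ} {W : Fin n → Fin n → ℝ} {f : Fin n → ℝ} {lam : ℝ}

theorem IsEig1Lap.sum_sum_mul_abs_sub (hsym : ∀ i j, W i j = W j i)
    (heig : IsEig1Lap W f lam) :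
    ∑ i, ∑ j, W i j * |f i - f j| = 2 * (lam * ∑ i, |f i|) := by
  obtain ⟨u, hu, hsign, α, hα, hrow⟩ := heig
  have hanti : ∀ i j, W i j * u i j = -(W j i * u j i) := fun i j => by rw [hsym, hu]; ring
  calc ∑ i, ∑ j, W i j * |f i - f j| = ∑ i, ∑ j, W i j * u i j * (f i - f j) := by
        simp only [mul_assoc, (mem_signSet_iff.1 (hsign _ _)).2]
    _ = 2 * (lam * ∑ i, |f i|) := by
        rw [sum_sum_mul_sub_of_antisymm hanti]
        simp only [hrow, mul_assoc, (mem_signSet_iff.1 (hα _)).2, mul_sum]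

theorem IsEig1Lap.exists_sum_eq_zero (hsym : ∀ i j, W i j = W j i) (heig : IsEig1Lap W f lam)
    (hlam : lam ≠ 0) : ∃ α : Fin n → ℝ, (∀ i, α i ∈ signSet (f i)) ∧ ∑ i, α i = 0 := by
  obtain ⟨u, hu, -, α, hα, hrow⟩ := heig
  have hanti : ∀ i j, W i j * u i j = -(W j i * u j i) := fun i j => by rw [hsym, hu]; ring
  refine ⟨α, hα, ?_⟩
  have := sum_sum_eq_zero_of_antisymm hanti
  simp only [hrow, ← mul_sum] at this
  exact (mul_eq_zero.1 this).resolve_left hlam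

theorem IsRatioCutLowerBound.le_of_isEig1Lap (hsym : ∀ i j, W i j = W j i)
    (hnonneg : ∀ i j, 0 ≤ W i j)
    (hconn : ∀ C : Finset (Fin n), C.Nonempty → C ≠ univ → 0 < cut W C)
    {h : ℝ} (hh : IsRatioCutLowerBound W h) (hf : ¬∃ c, ∀ i, f i = c)
    (heig : IsEig1Lap W f lam) : h ≤ lam := by
  have htv := heig.sum_sum_mul_abs_sub hsym
  have hpos := sum_sum_mul_abs_sub_pos hnonneg hconn hf
  have hmass : 0 < ∑ i, |f i| := by
    refine (sum_nonneg fun i _ => abs_nonneg (f i)).lt_of_ne fun h0 => ?_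
    rw [← h0] at htv
    linarith
  have hlam : 0 < lam := pos_of_mul_pos_left (by linarith) hmass.le
  obtain ⟨α, hα, hsum⟩ := heig.exists_sum_eq_zero hsym hlam.ne'
  have hneg := two_mul_card_pos_le_of_sum_eq_zero (f := -f) (α := -α)
    (fun i => neg_mem_signSet_neg (hα i)) (by simp [hsum])
  have := hh.mul_sum_abs_le hsym f (two_mul_card_pos_le_of_sum_eq_zero hα hsum)
    (by simpa using hneg)
  nlinarith

/-- The hypothesis is twice the pairing of `y` with the residual at the admissible pair
maximising it, so Hahn–Banach separation yields a zero of the residual. -/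
theorem isEig1Lap_of_forall_nonneg (hsym : ∀ i j, W i j = W j i)
    (h : ∀ y : Fin n → ℝ,
      0 ≤ ∑ i, ∑ j, W i j * (lexSign (f i - f j) (y i - y j) * (y i - y j)) +
        ∑ i, 2 * lam * (lexSign (f i) (-y i) * -y i)) :
    IsEig1Lap W f lam := by
  have hdual : ∀ y : Fin n → ℝ,
      ∃ p ∈ signPairs f, 0 ≤ ∑ i, eigenResidual W lam p i * y i := by
    intro y
    set u : Fin n → Fin n → ℝ := fun i j => lexSign (f i - f j) (y i - y j)
    have hu : ∀ i j, u i j = -u j i := fun i j => by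
      simp only [u]; rw [← lexSign_neg, neg_sub, neg_sub]
    refine ⟨(u, fun i => lexSign (f i) (-y i)),
      ⟨hu, fun i j => lexSign_mem_signSet _ _, fun i => lexSign_mem_signSet _ _⟩, ?_⟩
    have hanti : ∀ i j, W i j * u i j = -(W j i * u j i) := fun i j => by rw [hsym, hu]; ring
    have hpair := sum_sum_mul_sub_of_antisymm hanti y
    have hy := h y
    simp only [eigenResidual, LinearMap.coe_mk, AddHom.coe_mk, sub_mul, sum_sub_distrib]
    simp only [u, mul_assoc, mul_neg, sum_neg_distrib, ← mul_sum] at hpair hy ⊢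
    linarith
  obtain ⟨⟨u, α⟩, ⟨hu, husign, hαsign⟩, hzero⟩ := exists_mem_map_eq_zero_of_forall_exists
    (isCompact_signPairs f) (convex_signPairs f) (eigenResidual W lam) hdual
  exact ⟨u, hu, husign, α, hαsign, fun i => sub_eq_zero.1 (congrFun hzero i)⟩

theorem IsRatioCutLowerBound.isEig1Lap_chi (hsym : ∀ i j, W i j = W j i)
    (hnonneg : ∀ i j, 0 ≤ W i j) {h : ℝ}
    (hh : IsRatioCutLowerBound W h) {C : Finset (Fin n)} (hC : #C ≤ #Cᶜ)
    (hcutC : cut W C = h * #C) : IsEig1Lap W (chi C) h := by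
  refine isEig1Lap_of_forall_nonneg hsym fun y => coarea_nonneg y
    (φ := fun i j x => W i j * (lexSign (chi C i - chi C j) x * x))
    (ψ := fun i x => 2 * h * (lexSign (chi C i) (-x) * -x))
    (fun i j => (isPosHomogeneous_lexSign_mul _).const_mul _)
    (fun i => (isPosHomogeneous_lexSign_mul _).comp_neg.const_mul _) fun t => ?_
  set S : Finset (Fin n) := {i | t < y i}
  have hlevel : ∀ i, levelVec y t i = chi S i - (if t < 0 then 1 else 0) := fun i => by
    simp [levelVec, chi, S]
  have hCS : (#(C ∩ S) : ℝ) ≤ #C := by exact_mod_cast card_le_card inter_subset_left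
  have hCScompl : (#C : ℝ) ≤ #(C ∩ S)ᶜ := by
    exact_mod_cast hC.trans (card_le_card (compl_subset_compl.2 inter_subset_left))
  simp only [hlevel, sub_sub_sub_cancel_right, sum_sum_mul_lexSign_chi hsym, ← mul_sum]
  split_ifs
  · have hcover : (#C : ℝ) ≤ #(C ∩ S) + #Sᶜ := by
      have : C ⊆ (C ∩ S) ∪ Sᶜ := fun i hi => by by_cases hiS : i ∈ S <;> simp [hi, hiS]
      exact_mod_cast (card_le_card this).trans (card_union_le _ _)
    have := hh (C ∩ S) (#C - #Sᶜ) (by linarith)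
      (by linarith [Nat.cast_nonneg (α := ℝ) #Sᶜ])
    rw [sum_lexSign_chi_one_sub_chi]
    linarith [cut_nonneg hnonneg (C ∪ S)]
  · have hcover : (#Cᶜ : ℝ) ≤ #(C ∪ S)ᶜ + #(Cᶜ ∩ S) := by
      have : Cᶜ ⊆ (C ∪ S)ᶜ ∪ (Cᶜ ∩ S) := fun i hi => by
        by_cases hiS : i ∈ S <;> simp_all
      exact_mod_cast (card_le_card this).trans (card_union_le _ _)
    have hunion : (#C : ℝ) ≤ #(C ∪ S) := by exact_mod_cast card_le_card subset_union_left
    have := hh (C ∩ S) #(C ∩ S) le_rfl (by linarith)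
    have := hh (C ∪ S) (#C - #(Cᶜ ∩ S))
      (by linarith [Nat.cast_nonneg (α := ℝ) #(Cᶜ ∩ S)])
      (by linarith [(show (#C : ℝ) ≤ #Cᶜ by exact_mod_cast hC)])
    simp only [sub_zero, sum_lexSign_chi_neg_chi]
    linarith

end Eig1Lap

section Cheeger

variable {n : ℕ} {W : Fin n → Fin n → ℝ}

theorem RCC_compl (hsym : ∀ i j, W i j = W j i) (C : Finset (Fin n)) : RCC W Cᶜ = RCC W C := by
  have hcut := cut_compl hsym C
  rw [cut, cut, compl_compl] at hcut
  rw [RCC, RCC, compl_compl, min_comm, hcut]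

theorem isRatioCutLowerBound_of_isLeast (hnonneg : ∀ i j, 0 ≤ W i j) {h : ℝ}
    (hmin : IsLeast {r | ∃ C : Finset (Fin n), C.Nonempty ∧ C ≠ univ ∧ r = RCC W C} h) :
    IsRatioCutLowerBound W h := by
  intro T m hmT hmTc
  have hm : m ≤ min (#T : ℝ) #Tᶜ := le_min hmT hmTc
  obtain ⟨C, -, -, rfl⟩ := hmin.1
  have hRCC : 0 ≤ RCC W C := div_nonneg (cut_nonneg hnonneg C) (by positivity)
  rcases le_or_gt (min (#T : ℝ) #Tᶜ) 0 with hmin0 | hmin0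
  · nlinarith [cut_nonneg hnonneg T]
  have hT : T.Nonempty := card_pos.1 (by exact_mod_cast (lt_min_iff.1 hmin0).1)
  have hTc : Tᶜ.Nonempty := card_pos.1 (by exact_mod_cast (lt_min_iff.1 hmin0).2)
  have hTuniv : T ≠ univ := by simpa using (compl_ne_univ_iff_nonempty Tᶜ).2 hTc
  calc RCC W C * m ≤ RCC W C * min (#T : ℝ) #Tᶜ := mul_le_mul_of_nonneg_left hm hRCC
    _ ≤ cut W T := (le_div_iff₀ hmin0).1 (hmin.2 ⟨T, hT, hTuniv, rfl⟩)

theorem exists_cut_eq_of_isLeast (hsym : ∀ i j, W i j = W j i) {h : ℝ}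
    (hmin : IsLeast {r | ∃ C : Finset (Fin n), C.Nonempty ∧ C ≠ univ ∧ r = RCC W C} h) :
    ∃ C : Finset (Fin n), C.Nonempty ∧ C ≠ univ ∧ #C ≤ #Cᶜ ∧ cut W C = h * #C := by
  obtain ⟨C, hne, huniv, rfl⟩ := hmin.1
  obtain ⟨D, hD, hDuniv, hDC, hDle⟩ : ∃ D : Finset (Fin n),
      D.Nonempty ∧ D ≠ univ ∧ RCC W D = RCC W C ∧ #D ≤ #Dᶜ := by
    rcases le_total #C #Cᶜ with hle | hle
    · exact ⟨C, hne, huniv, rfl, hle⟩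
    · exact ⟨Cᶜ, (compl_ne_univ_iff_nonempty Cᶜ).1 (by rwa [compl_compl]),
        (compl_ne_univ_iff_nonempty C).2 hne, RCC_compl hsym C, by rwa [compl_compl]⟩
  refine ⟨D, hD, hDuniv, hDle, ?_⟩
  rw [← hDC, RCC, min_eq_left (by exact_mod_cast hDle),
    div_mul_cancel₀ _ (by exact_mod_cast hD.card_pos.ne')]
  rfl

end Cheeger

theorem second_eigenvalue_eq_cheeger_general (n : ℕ)
    (W : Fin n → Fin n → ℝ)
    (hsym : ∀ i j, W i j = W j i) (hnonneg : ∀ i j, 0 ≤ W i j)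
    (hconn : ∀ C : Finset (Fin n), C.Nonempty → C ≠ Finset.univ →
      0 < ∑ i ∈ C, ∑ j ∈ Cᶜ, W i j)
    (hRCC : ℝ)
    (hmin : IsLeast {r : ℝ | ∃ C : Finset (Fin n), C.Nonempty ∧ C ≠ Finset.univ ∧
      r = RCC W C} hRCC) :
    IsLeast {lam : ℝ | ∃ f : Fin n → ℝ, (¬ ∃ c : ℝ, ∀ i, f i = c) ∧
      IsEig1Lap W f lam} hRCC := by
  have hbound := isRatioCutLowerBound_of_isLeast hnonneg hmin
  obtain ⟨C, hne, huniv, hsmall, hcut⟩ := exists_cut_eq_of_isLeast hsym hmin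
  refine ⟨⟨chi C, not_exists_const_chi hne huniv,
    hbound.isEig1Lap_chi hsym hnonneg hsmall hcut⟩, ?_⟩
  rintro lam ⟨f, hf, heig⟩
  exact hbound.le_of_isEig1Lap hsym hnonneg hconn hf heig

/-- For a connected graph, the smallest eigenvalue of the graph 1-Laplacian admitting a
nonconstant eigenvector exists and equals the optimal ratio Cheeger cut `h_RCC`. -/
theorem second_eigenvalue_eq_cheeger (n : ℕ) (hn : 2 ≤ n)
    (W : Fin n → Fin n → ℝ)
    (hsym : ∀ i j, W i j = W j i) (hnonneg : ∀ i j, 0 ≤ W i j)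
    (hconn : ∀ C : Finset (Fin n), C.Nonempty → C ≠ Finset.univ →
      0 < ∑ i ∈ C, ∑ j ∈ Cᶜ, W i j)
    (hRCC : ℝ)
    (hmin : IsLeast {r : ℝ | ∃ C : Finset (Fin n), C.Nonempty ∧ C ≠ Finset.univ ∧
      r = RCC W C} hRCC) :
    IsLeast {lam : ℝ | ∃ f : Fin n → ℝ, (¬ ∃ c : ℝ, ∀ i, f i = c) ∧
      IsEig1Lap W f lam} hRCC :=
  second_eigenvalue_eq_cheeger_general n W hsym hnonneg hconn hRCC hmin
end

section
/- Let f ∈ ℝ^n with f_i ≥ 0 for all i. Then TV(f) = ∫₀^∞ ( Σ_{(i,j) : f_i > t ≥ f_j} w_ij ) dt, i.e. the total variation of a nonnegative vector equals the integral over t ≥ 0 of the cut values of its super-level sets {i : f_i > t}. -/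
/-!
Layer-cake argument: the pair `(i, j)` contributes `w_ij` to the cut at level `t` exactly when
`t ∈ [f_j, f_i)`, so integrating over `t ≥ 0` (using `f_j ≥ 0`) gives `w_ij (f_i − f_j)⁺`.
Since `|x| = x⁺ + (−x)⁺` and `W` is symmetric, summing these over all ordered pairs gives
half of `Σ_{i,j} w_ij |f_i − f_j|`.
-/

open Finset MeasureTheory

/-- Total variation `TV(f) = ½ Σ_{i,j} w_ij |f_i − f_j|`. -/
noncomputable def TV {n : ℕ} (W : Fin n → Fin n → ℝ) (f : Fin n → ℝ) : ℝ :=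
  (1 / 2) * ∑ i, ∑ j, W i j * |f i - f j|

lemma ite_lt_and_le_eq_indicator (a b c : ℝ) :
    (fun t : ℝ => if t < b ∧ a ≤ t then c else 0) = (Set.Ico a b).indicator fun _ => c := by
  ext t
  simp [Set.indicator, and_comm]

lemma integrable_ite_lt_and_le (a b c : ℝ) :
    Integrable fun t : ℝ => if t < b ∧ a ≤ t then c else 0 := by
  rw [ite_lt_and_le_eq_indicator, integrable_indicator_iff measurableSet_Ico]
  exact integrableOn_const (by simp [Real.volume_Ico])

lemma setIntegral_Ioi_ite_lt_and_le {a : ℝ} (ha : 0 ≤ a) (b c : ℝ) :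
    ∫ t in Set.Ioi 0, (if t < b ∧ a ≤ t then c else 0) = c * max (b - a) 0 := by
  have hsub : Set.Ico a b ⊆ Set.Ici 0 := fun t ht => ha.trans ht.1
  rw [← integral_Ici_eq_integral_Ioi, ite_lt_and_le_eq_indicator,
    setIntegral_indicator measurableSet_Ico, Set.inter_eq_right.2 hsub, setIntegral_const,
    Real.volume_real_Ico, smul_eq_mul, mul_comm]

section SumOverPairs

variable {ι : Type*} [Fintype ι] (W : ι → ι → ℝ) (f : ι → ℝ)

lemma setIntegral_Ioi_sum_ite_lt_and_le (hf : ∀ i, 0 ≤ f i) :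
    ∫ t in Set.Ioi 0, (∑ i, ∑ j, if t < f i ∧ f j ≤ t then W i j else 0)
      = ∑ i, ∑ j, W i j * max (f i - f j) 0 := by
  rw [integral_finsetSum _ fun i _ => integrable_finsetSum _ fun j _ =>
    (integrable_ite_lt_and_le _ _ _).integrableOn]
  refine sum_congr rfl fun i _ => ?_
  rw [integral_finsetSum _ fun j _ => (integrable_ite_lt_and_le _ _ _).integrableOn]
  exact sum_congr rfl fun j _ => setIntegral_Ioi_ite_lt_and_le (hf j) _ _

lemma sum_mul_abs_sub_eq_two_mul_sum_mul_max (hW : ∀ i j, W i j = W j i) :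
    ∑ i, ∑ j, W i j * |f i - f j| = 2 * ∑ i, ∑ j, W i j * max (f i - f j) 0 := by
  have hswap : ∑ i, ∑ j, W i j * max (-(f i - f j)) 0
      = ∑ i, ∑ j, W i j * max (f i - f j) 0 := by
    rw [sum_comm]
    exact sum_congr rfl fun i _ => sum_congr rfl fun j _ => by rw [hW j i, neg_sub]
  simp only [← max_zero_add_max_neg_zero_eq_abs_self, mul_add, sum_add_distrib, hswap]
  ring

end SumOverPairs

theorem coarea_formula_general (n : ℕ)
    (W : Fin n → Fin n → ℝ)
    (hsym : ∀ i j, W i j = W j i)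
    (f : Fin n → ℝ) (hf : ∀ i, 0 ≤ f i) :
    TV W f = ∫ t in Set.Ioi (0 : ℝ),
      (∑ i, ∑ j, if t < f i ∧ f j ≤ t then W i j else 0) := by
  rw [TV, setIntegral_Ioi_sum_ite_lt_and_le W f hf,
    sum_mul_abs_sub_eq_two_mul_sum_mul_max W f hsym]
  ring

/-- Coarea formula: for a nonnegative vector `f`, the total variation equals the integral
over `t ≥ 0` of the cut values of the super-level sets `{i : f_i > t}`. -/
theorem coarea_formula (n : ℕ) (hn : 2 ≤ n)
    (W : Fin n → Fin n → ℝ)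
    (hsym : ∀ i j, W i j = W j i) (hnonneg : ∀ i j, 0 ≤ W i j)
    (f : Fin n → ℝ) (hf : ∀ i, 0 ≤ f i) :
    TV W f = ∫ t in Set.Ioi (0 : ℝ),
      (∑ i, ∑ j, if t < f i ∧ f j ≤ t then W i j else 0) :=
  coarea_formula_general n W hsym f hf
end

section
/- Let f ∈ ℝ^n be nonconstant with ‖f‖₁ = 1, and suppose |n₊ − n₋| ≤ n₀ where n₊ = |{i : f_i > 0}|, n₋ = |{i : f_i < 0}|, n₀ = |{i : f_i = 0}| (in particular 0 is a median of f). Set λ = TV(f) = F₁(f), and define v ∈ ℝ^n by v_i = sign(f_i) if f_i ≠ 0 and v_i = −(n₊ − n₋)/n₀ if f_i = 0 (if n₀ = 0 then n₊ = n₋ and no such entries occur); then ⟨v, 1⟩ = 0 and ‖v‖_∞ ≤ 1. If u ∈ ℝ^n satisfies TV(u) − λ⟨u, v⟩ < 0, then u is nonconstant and, for any median m of u, the vector u' = u − m·1 satisfies F₁(u') < F₁(f). -/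
open Finset

/-- `F₁(f) = TV(f) / ‖f‖₁`. -/
noncomputable def F1 {n : ℕ} (W : Fin n → Fin n → ℝ) (f : Fin n → ℝ) : ℝ :=
  TV W f / ∑ i, |f i|

/-!
Shifting `u` by a constant changes neither `TV(u)` nor `⟨u, v⟩` (as `⟨v, 1⟩ = 0`), and
`⟨u', v⟩ ≤ ‖u'‖₁` because `‖v‖_∞ ≤ 1`. Hence `TV(u') = TV(u) < λ⟨u, v⟩ ≤ λ‖u'‖₁` for every shift
`u' = u − c·1`, which forces `‖u'‖₁ > 0` (so `u` is nonconstant) and `F₁(u') < λ = F₁(f)`.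
The choice of `v` on the zero set of `f` is exactly what makes `⟨v, 1⟩ = 0` while `|v| ≤ 1`.
-/

section TotalVariation

variable {n : ℕ} (W : Fin n → Fin n → ℝ)

theorem TV_nonneg (hW : ∀ i j, 0 ≤ W i j) (f : Fin n → ℝ) : 0 ≤ TV W f :=
  mul_nonneg (by norm_num) <| sum_nonneg fun i _ => sum_nonneg fun j _ =>
    mul_nonneg (hW i j) (abs_nonneg _)

theorem TV_sub_const (u : Fin n → ℝ) (c : ℝ) : TV W (fun i => u i - c) = TV W u := by
  simp only [TV, sub_sub_sub_cancel_right]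

end TotalVariation

section InnerProduct

variable {n : ℕ} {v : Fin n → ℝ}

theorem sum_sub_const_mul_of_sum_eq_zero (hv : ∑ i, v i = 0) (u : Fin n → ℝ) (c : ℝ) :
    ∑ i, (u i - c) * v i = ∑ i, u i * v i := by
  simp only [sub_mul, sum_sub_distrib, ← mul_sum, hv, mul_zero, sub_zero]

theorem sum_mul_le_sum_abs (hv : ∀ i, |v i| ≤ 1) (u : Fin n → ℝ) :
    ∑ i, u i * v i ≤ ∑ i, |u i| :=
  sum_le_sum fun i _ => calc
    u i * v i ≤ |u i| * |v i| := abs_mul (u i) (v i) ▸ le_abs_self _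
    _ ≤ |u i| := mul_le_of_le_one_right (abs_nonneg _) (hv i)

end InnerProduct

section BalancedSign

variable {n : ℕ} (f : Fin n → ℝ)

noncomputable def posCount : ℝ := (#{i | 0 < f i} : ℕ)

noncomputable def negCount : ℝ := (#{i | f i < 0} : ℕ)

noncomputable def zeroCount : ℝ := (#{i | f i = 0} : ℕ)

noncomputable def balancedSign (i : Fin n) : ℝ :=
  if 0 < f i then 1 else if f i < 0 then -1 else -((posCount f - negCount f) / zeroCount f)

variable {f}

theorem balancedSign_eq (i : Fin n) : balancedSign f i =
    ((if 0 < f i then 1 else 0) - if f i < 0 then 1 else 0) -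
      if f i = 0 then (posCount f - negCount f) / zeroCount f else 0 := by
  rcases lt_trichotomy (f i) 0 with h | h | h
  · simp [balancedSign, h, h.ne, h.not_gt]
  · simp [balancedSign, h]
  · simp [balancedSign, h, h.ne', h.not_gt]

theorem sum_balancedSign (hf : |posCount f - negCount f| ≤ zeroCount f) :
    ∑ i, balancedSign f i = 0 := by
  have hcancel : zeroCount f * ((posCount f - negCount f) / zeroCount f) =
      posCount f - negCount f := by
    rcases (show 0 ≤ zeroCount f from Nat.cast_nonneg _).eq_or_lt with h | h
    · rw [← h] at hf
      rw [abs_nonpos_iff.1 hf, zero_div, mul_zero]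
    · exact mul_div_cancel₀ _ h.ne'
  simp only [balancedSign_eq, sum_sub_distrib, sum_boole, sum_ite, sum_const_zero, add_zero,
    sum_const, nsmul_eq_mul]
  rw [← zeroCount, hcancel]
  simp [posCount, negCount]

theorem abs_balancedSign_le_one (hf : |posCount f - negCount f| ≤ zeroCount f) (i : Fin n) :
    |balancedSign f i| ≤ 1 := by
  rcases lt_trichotomy (f i) 0 with h | h | h
  · simp [balancedSign, h, h.not_gt]
  · have hz : 0 < zeroCount f := Nat.cast_pos.2 <| card_pos.2 ⟨i, by simp [h]⟩
    simp only [balancedSign, h, lt_irrefl, if_false, abs_neg, abs_div, abs_of_pos hz]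
    exact (div_le_one hz).2 hf
  · simp [balancedSign, h]

end BalancedSign

section Descent

variable {n : ℕ} {W : Fin n → Fin n → ℝ} {v u : Fin n → ℝ} {lam : ℝ}

theorem TV_sub_const_lt_of_inner_objective_neg (hv₀ : ∑ i, v i = 0) (hv₁ : ∀ i, |v i| ≤ 1)
    (hlam : 0 ≤ lam) (hu : TV W u - lam * ∑ i, u i * v i < 0) (c : ℝ) :
    TV W (fun i => u i - c) < lam * ∑ i, |u i - c| := calc
  TV W (fun i => u i - c) = TV W u := TV_sub_const W u c
  _ < lam * ∑ i, u i * v i := by linarith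
  _ = lam * ∑ i, (u i - c) * v i := by rw [sum_sub_const_mul_of_sum_eq_zero hv₀]
  _ ≤ lam * ∑ i, |u i - c| :=
    mul_le_mul_of_nonneg_left (sum_mul_le_sum_abs hv₁ fun i => u i - c) hlam

variable (hW : ∀ i j, 0 ≤ W i j) (hv₀ : ∑ i, v i = 0) (hv₁ : ∀ i, |v i| ≤ 1)
  (hlam : 0 ≤ lam) (hu : TV W u - lam * ∑ i, u i * v i < 0)
include hW hv₀ hv₁ hlam hu

theorem sum_abs_sub_const_pos_of_inner_objective_neg (c : ℝ) : 0 < ∑ i, |u i - c| :=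
  pos_of_mul_pos_right ((TV_nonneg W hW _).trans_lt
    (TV_sub_const_lt_of_inner_objective_neg hv₀ hv₁ hlam hu c)) hlam

theorem not_const_of_inner_objective_neg : ¬ ∃ c : ℝ, ∀ i, u i = c := by
  rintro ⟨c, hc⟩
  have h := sum_abs_sub_const_pos_of_inner_objective_neg hW hv₀ hv₁ hlam hu c
  simp [hc] at h

theorem F1_sub_const_lt_of_inner_objective_neg (c : ℝ) : F1 W (fun i => u i - c) < lam :=
  (div_lt_iff₀ (sum_abs_sub_const_pos_of_inner_objective_neg hW hv₀ hv₁ hlam hu c)).2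
    (TV_sub_const_lt_of_inner_objective_neg hv₀ hv₁ hlam hu c)

end Descent

theorem descent_modified_ipm_general (n : ℕ)
    (W : Fin n → Fin n → ℝ)
    (hnonneg : ∀ i j, 0 ≤ W i j)
    (f : Fin n → ℝ)
    (hnorm : ∑ i, |f i| = 1)
    (hmedzero : |((Finset.univ.filter (fun i => 0 < f i)).card : ℝ) -
        ((Finset.univ.filter (fun i => f i < 0)).card : ℝ)| ≤
      ((Finset.univ.filter (fun i => f i = 0)).card : ℝ))
    (lam : ℝ) (hlam : lam = TV W f)
    (v : Fin n → ℝ)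
    (hv : ∀ i, v i = if 0 < f i then 1 else if f i < 0 then -1 else
      -((((Finset.univ.filter (fun i => 0 < f i)).card : ℝ) -
          ((Finset.univ.filter (fun i => f i < 0)).card : ℝ)) /
        ((Finset.univ.filter (fun i => f i = 0)).card : ℝ))) :
    (∑ i, v i = 0) ∧ (∀ i, |v i| ≤ 1) ∧
    ∀ u : Fin n → ℝ, TV W u - lam * (∑ i, u i * v i) < 0 →
      (¬ ∃ c : ℝ, ∀ i, u i = c) ∧
      ∀ m : ℝ, (∀ c : ℝ, ∑ i, |u i - m| ≤ ∑ i, |u i - c|) →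
        F1 W (fun i => u i - m) < F1 W f := by
  obtain rfl : v = balancedSign f := funext hv
  have hv₀ := sum_balancedSign hmedzero
  have hv₁ := abs_balancedSign_le_one hmedzero
  have hlam₀ : 0 ≤ lam := hlam ▸ TV_nonneg W hnonneg f
  have hF1f : F1 W f = lam := by rw [F1, hnorm, div_one, hlam]
  refine ⟨hv₀, hv₁, fun u hu => ⟨?_, fun m _ => ?_⟩⟩
  · exact not_const_of_inner_objective_neg hnonneg hv₀ hv₁ hlam₀ hu
  · exact hF1f ▸ F1_sub_const_lt_of_inner_objective_neg hnonneg hv₀ hv₁ hlam₀ hu m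

/-- Descent lemma for the modified IPM for the 1-Laplacian: for a nonconstant `f` with
`‖f‖₁ = 1` and `|n₊ − n₋| ≤ n₀`, the subgradient-type vector `v` satisfies `⟨v,1⟩ = 0`,
`‖v‖_∞ ≤ 1`, and any `u` with negative inner objective `TV(u) − λ⟨u,v⟩ < 0` (where
`λ = TV(f) = F₁(f)`) is nonconstant and, after subtracting any median, strictly decreases
`F₁`. -/
theorem descent_modified_ipm (n : ℕ) (hn : 2 ≤ n)
    (W : Fin n → Fin n → ℝ)
    (hsym : ∀ i j, W i j = W j i) (hnonneg : ∀ i j, 0 ≤ W i j)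
    (f : Fin n → ℝ)
    (hnonconst : ¬ ∃ c : ℝ, ∀ i, f i = c)
    (hnorm : ∑ i, |f i| = 1)
    (hmedzero : |((Finset.univ.filter (fun i => 0 < f i)).card : ℝ) -
        ((Finset.univ.filter (fun i => f i < 0)).card : ℝ)| ≤
      ((Finset.univ.filter (fun i => f i = 0)).card : ℝ))
    (lam : ℝ) (hlam : lam = TV W f)
    (v : Fin n → ℝ)
    (hv : ∀ i, v i = if 0 < f i then 1 else if f i < 0 then -1 else
      -((((Finset.univ.filter (fun i => 0 < f i)).card : ℝ) -
          ((Finset.univ.filter (fun i => f i < 0)).card : ℝ)) /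
        ((Finset.univ.filter (fun i => f i = 0)).card : ℝ))) :
    (∑ i, v i = 0) ∧ (∀ i, |v i| ≤ 1) ∧
    ∀ u : Fin n → ℝ, TV W u - lam * (∑ i, u i * v i) < 0 →
      (¬ ∃ c : ℝ, ∀ i, u i = c) ∧
      ∀ m : ℝ, (∀ c : ℝ, ∑ i, |u i - m| ≤ ∑ i, |u i - c|) →
        F1 W (fun i => u i - m) < F1 W f :=
  descent_modified_ipm_general n W hnonneg f hnorm hmedzero lam hlam v hv
end

section
/- Fix b ∈ ℝ^n. Then min over u ∈ ℝ^n with ‖u‖₂ ≤ 1 of [½ Σ_{i,j=1}^n w_ij |u_i − u_j| − ⟨u, b⟩] equals the negative of the minimum over all matrices α ∈ ℝ^{n×n} with α_ij = −α_ji and |α_ij| ≤ 1 for all i,j of ‖Aα − b‖₂, where (Aα)_i = Σ_{j=1}^n w_ij α_ij. -/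
/-!
The map `A` sends the compact convex set `K` of antisymmetric matrices with entries in `[-1, 1]`
to a compact convex set `A K`, and `⟨u, A α⟩ = ½ Σ w_ij α_ij (u_i - u_j)`, so the support function
of `A K` is `½ Σ w_ij |u_i - u_j|`, attained at `α_ij = sign (u_i - u_j)`. For any such set `C`
with support function `σ`, the minimum of `σ u - ⟨u, b⟩` over the unit ball is `-dist (b, C)`:
Cauchy–Schwarz gives `≥`, and if `p` is the point of `C` nearest to `b`, the obtuse-angle
characterization of `p` says that `p` maximizes `⟨u, ·⟩` on `C` for the unit vector `u` from `p`
to `b`, where the objective equals `-‖b - p‖`.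
-/

open Finset RealInnerProductSpace

section SupportFunction

variable {E : Type*} [NormedAddCommGroup E] [InnerProductSpace ℝ E]

theorem exists_isLeast_norm_sub_and_isLeast_sub_inner {C : Set E} (hC : IsComplete C)
    (hconv : Convex ℝ C) {σ : E → ℝ} (hσ : ∀ u, IsGreatest ((fun c => ⟪u, c⟫) '' C) (σ u))
    (b : E) :
    ∃ p ∈ C, IsLeast ((fun c => ‖c - b‖) '' C) ‖p - b‖ ∧
      IsLeast ((fun u => σ u - ⟪u, b⟫) '' Metric.closedBall 0 1) (-‖p - b‖) := by
  obtain ⟨c₀, hc₀, -⟩ := (hσ 0).1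
  obtain ⟨p, hpC, hp⟩ := exists_norm_eq_iInf_of_complete_convex ⟨c₀, hc₀⟩ hC hconv b
  have hobtuse : ∀ c ∈ C, ⟪b - p, c - p⟫ ≤ 0 :=
    (norm_eq_iInf_iff_real_inner_le_zero hconv hpC).1 hp
  refine ⟨p, hpC, ⟨⟨p, hpC, rfl⟩, ?_⟩, ⟨?_, ?_⟩⟩
  · rintro _ ⟨c, hc, rfl⟩
    have hbdd : BddBelow (Set.range fun w : C => ‖b - w‖) := ⟨0, by rintro _ ⟨w, rfl⟩; positivity⟩
    have : ‖b - p‖ ≤ ‖b - c‖ := hp ▸ ciInf_le hbdd ⟨c, hc⟩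
    simpa only [norm_sub_rev b] using this
  · -- if `b = p` then `u = 0`, and `σ 0 = 0`
    set u := ‖b - p‖⁻¹ • (b - p)
    refine ⟨u, ?_, ?_⟩
    · rw [mem_closedBall_zero_iff, norm_smul, norm_inv, norm_norm]
      exact inv_mul_le_one_of_le₀ le_rfl (norm_nonneg _)
    · obtain ⟨c, hc, hσc⟩ := (hσ u).1
      have hσp : σ u = ⟪u, p⟫ := by
        refine le_antisymm ?_ ((hσ u).2 ⟨p, hpC, rfl⟩)
        have := mul_nonpos_of_nonneg_of_nonpos (inv_nonneg.2 (norm_nonneg (b - p))) (hobtuse c hc)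
        rw [← hσc, ← sub_nonpos, ← inner_sub_right]
        simpa only [u, inner_smul_left, conj_trivial] using this
      dsimp only
      rw [hσp, ← inner_sub_right, inner_smul_left, conj_trivial, ← neg_sub b p, inner_neg_right,
        real_inner_self_eq_norm_sq, norm_neg]
      rcases eq_or_ne ‖b - p‖ 0 with h | h
      · simp [h]
      · field_simp
  · rintro _ ⟨u, hu, rfl⟩
    rw [mem_closedBall_zero_iff] at hu
    calc -‖p - b‖ ≤ -(‖u‖ * ‖p - b‖) := by nlinarith [norm_nonneg (p - b)]
      _ ≤ ⟪u, p - b⟫ := by linarith [abs_le.1 (abs_real_inner_le_norm u (p - b))]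
      _ = ⟪u, p⟫ - ⟪u, b⟫ := inner_sub_right u p b
      _ ≤ σ u - ⟪u, b⟫ := by gcongr; exact (hσ u).2 ⟨p, hpC, rfl⟩

end SupportFunction

noncomputable section

variable {ι : Type*} [Fintype ι]

-- In the sup norm of `ι → ι → ℝ` the closed unit ball is the box `|α i j| ≤ 1`.
def antisymmUnitBall (ι : Type*) [Fintype ι] : Set (ι → ι → ℝ) :=
  {α | ∀ i j, α i j = -α j i} ∩ Metric.closedBall 0 1

theorem mem_antisymmUnitBall {α : ι → ι → ℝ} :
    α ∈ antisymmUnitBall ι ↔ (∀ i j, α i j = -α j i) ∧ ∀ i j, |α i j| ≤ 1 := by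
  simp only [antisymmUnitBall, Set.mem_inter_iff, Set.mem_ofPred_eq, mem_closedBall_zero_iff,
    pi_norm_le_iff_of_nonneg zero_le_one, Real.norm_eq_abs]

theorem isCompact_antisymmUnitBall : IsCompact (antisymmUnitBall ι) := by
  refine (isCompact_closedBall 0 1).inter_left ?_
  simp only [Set.ofPred_forall]
  exact isClosed_iInter fun i => isClosed_iInter fun j => isClosed_eq (by fun_prop) (by fun_prop)

theorem convex_antisymmUnitBall : Convex ℝ (antisymmUnitBall ι) := by
  refine Convex.inter ?_ (convex_closedBall 0 1)
  intro α hα β hβ s t _ _ _ i j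
  simp only [Pi.add_apply, Pi.smul_apply, smul_eq_mul, hα i j, hβ i j]
  ring

def weightedDivergence (W : ι → ι → ℝ) : (ι → ι → ℝ) →ₗ[ℝ] EuclideanSpace ℝ ι where
  toFun α := WithLp.toLp 2 fun i => ∑ j, W i j * α i j
  map_add' α β := by ext i; simp [mul_add, sum_add_distrib]
  map_smul' c α := by ext i; simp [mul_left_comm, mul_sum]

def totalVariation (W : ι → ι → ℝ) (u : ι → ℝ) : ℝ :=
  (1 / 2) * ∑ i, ∑ j, W i j * |u i - u j|

theorem inner_weightedDivergence {W α : ι → ι → ℝ} (hW : ∀ i j, W i j = W j i)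
    (hα : ∀ i j, α i j = -α j i) (u : EuclideanSpace ℝ ι) :
    ⟪u, weightedDivergence W α⟫ = (1 / 2) * ∑ i, ∑ j, W i j * α i j * (u i - u j) := by
  have hswap : ∑ i, ∑ j, W i j * α i j * u j = -∑ i, ∑ j, W i j * α i j * u i := by
    rw [sum_comm, ← sum_neg_distrib]
    refine sum_congr rfl fun i _ => ?_
    rw [← sum_neg_distrib]
    refine sum_congr rfl fun j _ => ?_
    rw [hW i j, hα i j]
    ring
  have hinner : ⟪u, weightedDivergence W α⟫ = ∑ i, ∑ j, W i j * α i j * u i := by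
    simp only [weightedDivergence, LinearMap.coe_mk, AddHom.coe_mk, PiLp.inner_apply,
      RCLike.inner_apply, conj_trivial, sum_mul]
  rw [hinner]
  simp only [mul_sub, sum_sub_distrib, hswap]
  ring

theorem inner_weightedDivergence_le_totalVariation {W α : ι → ι → ℝ} (hW : ∀ i j, W i j = W j i)
    (hW₀ : ∀ i j, 0 ≤ W i j) (hα : α ∈ antisymmUnitBall ι) (u : EuclideanSpace ℝ ι) :
    ⟪u, weightedDivergence W α⟫ ≤ totalVariation W u := by
  rw [mem_antisymmUnitBall] at hα
  rw [inner_weightedDivergence hW hα.1, totalVariation]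
  gcongr (1 / 2) * ∑ i, ∑ j, ?_ with i _ j _
  rw [mul_assoc]
  refine mul_le_mul_of_nonneg_left ?_ (hW₀ i j)
  calc α i j * (u i - u j) ≤ |α i j| * |u i - u j| := abs_mul (α i j) _ ▸ le_abs_self _
    _ ≤ |u i - u j| := mul_le_of_le_one_left (abs_nonneg _) (hα.2 i j)

def signMatrix (u : ι → ℝ) : ι → ι → ℝ := fun i j => SignType.sign (u i - u j)

theorem signMatrix_mem_antisymmUnitBall (u : ι → ℝ) : signMatrix u ∈ antisymmUnitBall ι := by
  rw [mem_antisymmUnitBall]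
  refine ⟨fun i j => ?_, fun i j => ?_⟩
  · rw [signMatrix, signMatrix, ← neg_sub, Left.sign_neg, SignType.coe_neg]
  · rcases lt_trichotomy (u i - u j) 0 with h | h | h <;> simp [signMatrix, h]

theorem inner_weightedDivergence_signMatrix {W : ι → ι → ℝ} (hW : ∀ i j, W i j = W j i)
    (u : EuclideanSpace ℝ ι) :
    ⟪u, weightedDivergence W (signMatrix u)⟫ = totalVariation W u := by
  rw [inner_weightedDivergence hW ((mem_antisymmUnitBall.1 (signMatrix_mem_antisymmUnitBall u)).1)]
  simp only [signMatrix, mul_assoc, sign_mul_self, totalVariation]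

theorem isGreatest_inner_weightedDivergence {W : ι → ι → ℝ} (hW : ∀ i j, W i j = W j i)
    (hW₀ : ∀ i j, 0 ≤ W i j) (u : EuclideanSpace ℝ ι) :
    IsGreatest ((fun c => ⟪u, c⟫) '' (weightedDivergence W '' antisymmUnitBall ι))
      (totalVariation W u) := by
  rw [Set.image_image]
  refine ⟨⟨signMatrix u, signMatrix_mem_antisymmUnitBall u, ?_⟩, ?_⟩
  · exact inner_weightedDivergence_signMatrix hW u
  · rintro _ ⟨α, hα, rfl⟩
    exact inner_weightedDivergence_le_totalVariation hW hW₀ hα u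

theorem primalValues_eq_image (W : ι → ι → ℝ) (b : ι → ℝ) :
    {r : ℝ | ∃ u : ι → ℝ, (∑ i, (u i) ^ 2) ≤ 1 ∧
        r = (1 / 2) * (∑ i, ∑ j, W i j * |u i - u j|) - ∑ i, u i * b i} =
      (fun u : EuclideanSpace ℝ ι => totalVariation W u - ⟪u, WithLp.toLp 2 b⟫) ''
        Metric.closedBall (0 : EuclideanSpace ℝ ι) 1 := by
  ext r
  simp only [Set.mem_ofPred_eq, Set.mem_image, mem_closedBall_zero_iff, EuclideanSpace.norm_eq,
    Real.norm_eq_abs, sq_abs, Real.sqrt_le_one, totalVariation, PiLp.inner_apply,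
    RCLike.inner_apply, conj_trivial, mul_comm (b _), eq_comm (a := r)]
  exact ⟨fun ⟨u, hu⟩ => ⟨WithLp.toLp 2 u, hu⟩, fun ⟨x, hx⟩ => ⟨x.ofLp, hx⟩⟩

theorem dualValues_eq_image (W : ι → ι → ℝ) (b : ι → ℝ) :
    {r : ℝ | ∃ α : ι → ι → ℝ, (∀ i j, α i j = - α j i) ∧
        (∀ i j, |α i j| ≤ 1) ∧
        r = Real.sqrt (∑ i, ((∑ j, W i j * α i j) - b i) ^ 2)} =
      (fun c => ‖c - WithLp.toLp 2 b‖) '' (weightedDivergence W '' antisymmUnitBall ι) := by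
  ext r
  simp [EuclideanSpace.norm_eq, mem_antisymmUnitBall, weightedDivergence, eq_comm, and_assoc]

end

theorem inner_problem_duality_general (n : ℕ)
    (W : Fin n → Fin n → ℝ)
    (hsym : ∀ i j, W i j = W j i) (hnonneg : ∀ i j, 0 ≤ W i j)
    (b : Fin n → ℝ) :
    sInf {r : ℝ | ∃ u : Fin n → ℝ, (∑ i, (u i) ^ 2) ≤ 1 ∧
        r = (1 / 2) * (∑ i, ∑ j, W i j * |u i - u j|) - ∑ i, u i * b i} =
      - sInf {r : ℝ | ∃ α : Fin n → Fin n → ℝ, (∀ i j, α i j = - α j i) ∧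
        (∀ i j, |α i j| ≤ 1) ∧
        r = Real.sqrt (∑ i, ((∑ j, W i j * α i j) - b i) ^ 2)} := by
  obtain ⟨p, -, hdual, hprimal⟩ := exists_isLeast_norm_sub_and_isLeast_sub_inner
    (isCompact_antisymmUnitBall.image
      (weightedDivergence W).continuous_of_finiteDimensional).isComplete
    (convex_antisymmUnitBall.linear_image (weightedDivergence W))
    (isGreatest_inner_weightedDivergence hsym hnonneg) (WithLp.toLp 2 b)
  rw [primalValues_eq_image, dualValues_eq_image, hprimal.csInf_eq, hdual.csInf_eq]

/-- Duality for the inner problem of 1-spectral clustering: the minimum over the Euclidean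
unit ball of `½ Σ_{i,j} w_ij |u_i − u_j| − ⟨u, b⟩` equals the negative of the minimum, over
antisymmetric matrices `α` with `|α_ij| ≤ 1`, of `‖Aα − b‖₂` where `(Aα)_i = Σ_j w_ij α_ij`. -/
theorem inner_problem_duality (n : ℕ) (hn : 2 ≤ n)
    (W : Fin n → Fin n → ℝ)
    (hsym : ∀ i j, W i j = W j i) (hnonneg : ∀ i j, 0 ≤ W i j)
    (b : Fin n → ℝ) :
    sInf {r : ℝ | ∃ u : Fin n → ℝ, (∑ i, (u i) ^ 2) ≤ 1 ∧
        r = (1 / 2) * (∑ i, ∑ j, W i j * |u i - u j|) - ∑ i, u i * b i} =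
      - sInf {r : ℝ | ∃ α : Fin n → Fin n → ℝ, (∀ i j, α i j = - α j i) ∧
        (∀ i j, |α i j| ≤ 1) ∧
        r = Real.sqrt (∑ i, ((∑ j, W i j * α i j) - b i) ^ 2)} :=
  inner_problem_duality_general n W hsym hnonneg b
end

section
/- Let μ ∈ ℝ^n, λ > 0, α ≥ 0, and suppose s := sqrt( Σ_{i=1}^n ((λ|μ_i| − α)₊)² ) > 0, where x₊ = max{0, x}. Define f* ∈ ℝ^n by f*_i = sign(μ_i)(λ|μ_i| − α)₊ / s. Then ‖f*‖₂ = 1 and f* minimizes the convex function f ↦ α‖f‖₁ − λ⟨f, μ⟩ over the Euclidean unit ball {f ∈ ℝ^n : ‖f‖₂ ≤ 1}. -/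
/-!
Write `m_i = (λ|μ_i| − α)₊` and `s = ‖m‖₂`. Termwise, `α|f_i| − λ f_i μ_i ≥ −|f_i|(λ|μ_i| − α) ≥ −|f_i| m_i`,
so by Cauchy–Schwarz the objective is at least `−‖f‖₂ s ≥ −s` on the unit ball. Since
`m_i (λ|μ_i| − α) = m_i²`, the vector `f*` with `|f*_i| = m_i / s` and `f*_i μ_i = m_i |μ_i| / s`
attains the value `−Σ m_i² / s = −s`.
-/

open Finset

namespace Real

lemma sign_mul_self_eq_abs (x : ℝ) : sign x * x = |x| := by
  rcases lt_trichotomy x 0 with h | rfl | h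
  · rw [sign_of_neg h, abs_of_neg h]; ring
  · simp
  · rw [sign_of_pos h, abs_of_pos h]; ring

lemma abs_sign_of_ne_zero {x : ℝ} (hx : x ≠ 0) : |sign x| = 1 := by
  rcases sign_apply_eq_of_ne_zero x hx with h | h <;> simp [h]

end Real

lemma max_zero_mul_self_eq_sq (y : ℝ) : max 0 y * y = max 0 y ^ 2 := by
  rcases le_total y 0 with h | h
  · simp [max_eq_left h]
  · rw [max_eq_right h, sq]

section SoftThreshold

variable {c α : ℝ}

lemma abs_sign_mul_max_zero (hα : 0 ≤ α) (x : ℝ) :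
    |Real.sign x * max 0 (c * |x| - α)| = max 0 (c * |x| - α) := by
  rcases eq_or_ne x 0 with rfl | hx
  · simp [hα]
  · rw [abs_mul, Real.abs_sign_of_ne_zero hx, one_mul, abs_of_nonneg (le_max_left _ _)]

lemma sign_mul_max_zero_mul_self (x : ℝ) :
    Real.sign x * max 0 (c * |x| - α) * x = max 0 (c * |x| - α) * |x| := by
  rw [mul_right_comm, Real.sign_mul_self_eq_abs, mul_comm]

lemma neg_abs_mul_max_zero_le (hc : 0 ≤ c) (t x : ℝ) :
    -(|t| * max 0 (c * |x| - α)) ≤ α * |t| - c * (t * x) := by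
  have : c * (t * x) ≤ c * (|t| * |x|) :=
    mul_le_mul_of_nonneg_left ((le_abs_self _).trans (abs_mul t x).le) hc
  nlinarith [abs_nonneg t, le_max_right 0 (c * |x| - α)]

end SoftThreshold

section Normalization

variable {ι : Type*} [Fintype ι]

lemma sum_abs_mul_le_sqrt_sum_sq {f : ι → ℝ} (hf : ∑ i, f i ^ 2 ≤ 1) (g : ι → ℝ) :
    ∑ i, |f i| * g i ≤ √(∑ i, g i ^ 2) :=
  calc ∑ i, |f i| * g i ≤ √(∑ i, |f i| ^ 2) * √(∑ i, g i ^ 2) :=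
        Real.sum_mul_le_sqrt_mul_sqrt _ _ _
    _ ≤ 1 * √(∑ i, g i ^ 2) := by
        gcongr
        simpa only [sq_abs] using Real.sqrt_le_one.mpr hf
    _ = √(∑ i, g i ^ 2) := one_mul _

lemma sum_div_sqrt_sum_sq_sq_eq_one {g : ι → ℝ} (hg : 0 < √(∑ i, g i ^ 2)) :
    ∑ i, (g i / √(∑ j, g j ^ 2)) ^ 2 = 1 := by
  have hS : 0 < ∑ i, g i ^ 2 := Real.sqrt_pos.mp hg
  simp only [div_pow, ← sum_div, Real.sq_sqrt hS.le, div_self hS.ne']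

end Normalization

/-- Closed-form solution of the inner problem of the IPM for sparse PCA: the vector
`f*_i = sign(μ_i)(λ|μ_i| − α)₊ / s` with `s = sqrt(Σ_i ((λ|μ_i| − α)₊)²)` has unit
Euclidean norm and minimizes `f ↦ α‖f‖₁ − λ⟨f, μ⟩` over the Euclidean unit ball. -/
theorem sparse_pca_inner_closed_form (n : ℕ) (μ : Fin n → ℝ) (lam α : ℝ)
    (hlam : 0 < lam) (hα : 0 ≤ α)
    (hs : 0 < Real.sqrt (∑ i, (max 0 (lam * |μ i| - α)) ^ 2))
    (fstar : Fin n → ℝ)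
    (hf : ∀ i, fstar i = Real.sign (μ i) * max 0 (lam * |μ i| - α) /
      Real.sqrt (∑ j, (max 0 (lam * |μ j| - α)) ^ 2)) :
    Real.sqrt (∑ i, (fstar i) ^ 2) = 1 ∧
    ∀ f : Fin n → ℝ, (∑ i, (f i) ^ 2) ≤ 1 →
      α * (∑ i, |fstar i|) - lam * (∑ i, fstar i * μ i) ≤
        α * (∑ i, |f i|) - lam * (∑ i, f i * μ i) := by
  set s := √(∑ i, (max 0 (lam * |μ i| - α)) ^ 2)
  have habs (i : Fin n) : |fstar i| = max 0 (lam * |μ i| - α) / s := by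
    rw [hf i, abs_div, abs_sign_mul_max_zero hα, abs_of_pos hs]
  have hmul (i : Fin n) : fstar i * μ i = max 0 (lam * |μ i| - α) * |μ i| / s := by
    rw [hf i, div_mul_eq_mul_div, sign_mul_max_zero_mul_self]
  have hval : α * ∑ i, |fstar i| - lam * ∑ i, fstar i * μ i = -s :=
    calc α * ∑ i, |fstar i| - lam * ∑ i, fstar i * μ i
        = ∑ i, (α * |fstar i| - lam * (fstar i * μ i)) := by rw [sum_sub_distrib, mul_sum, mul_sum]
      _ = ∑ i, -(max 0 (lam * |μ i| - α) * (lam * |μ i| - α)) / s :=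
          sum_congr rfl fun i _ => by rw [habs, hmul]; ring
      _ = -((∑ i, max 0 (lam * |μ i| - α) ^ 2) / s) := by
          simp only [max_zero_mul_self_eq_sq, ← sum_div, sum_neg_distrib, neg_div]
      _ = -s := congrArg Neg.neg Real.div_sqrt
  refine ⟨?_, fun f hf1 => ?_⟩
  · have hunit : ∑ i, (max 0 (lam * |μ i| - α) / s) ^ 2 = 1 := sum_div_sqrt_sum_sq_sq_eq_one hs
    simp only [← sq_abs (fstar _), habs, hunit, Real.sqrt_one]
  · calc α * ∑ i, |fstar i| - lam * ∑ i, fstar i * μ i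
        = -s := hval
      _ ≤ -∑ i, |f i| * max 0 (lam * |μ i| - α) := neg_le_neg (sum_abs_mul_le_sqrt_sum_sq hf1 _)
      _ ≤ ∑ i, (α * |f i| - lam * (f i * μ i)) := by
          rw [← sum_neg_distrib]
          exact sum_le_sum fun i _ => neg_abs_mul_max_zero_le hlam.le _ _
      _ = α * ∑ i, |f i| - lam * ∑ i, f i * μ i := by
          rw [sum_sub_distrib, mul_sum, mul_sum]
end
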